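/- arXiv:math/9512226 — 5 statements merged into one kernel-verified Lean document; each statement's English description precedes it below -/
import Mathlib

section
/- If κ is a measurable cardinal and the set of strongly compact cardinals below κ is unbounded in κ, then κ is strongly compact. -/
open Cardinal

/-- `F` is an ultrafilter on the carrier set `A`: it is a collection of subsets of `A`
containing `A` but not `∅`, closed under supersets (within `A`) and finite intersections,
and containing either `X` or `A \ X` for every `X ⊆ A`. -/
def IsUltrafilterOn {α : Type} (A : Set α) (F : Set (Set α)) : Prop :=
  (∀ X ∈ F, X ⊆ A) ∧ A ∈ F ∧ ∅ ∉ F ∧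
    (∀ X ∈ F, ∀ Y, Y ⊆ A → X ⊆ Y → Y ∈ F) ∧
    (∀ X ∈ F, ∀ Y ∈ F, X ∩ Y ∈ F) ∧
    (∀ X, X ⊆ A → X ∈ F ∨ A \ X ∈ F)

/-- `F` is `κ`-complete: the intersection of any (nonempty) family of fewer than `κ`
members of `F` is again in `F`. -/
def IsKComplete {α : Type} (κ : Cardinal) (F : Set (Set α)) : Prop :=
  ∀ S : Set (Set α), S.Nonempty → #S < κ → (∀ X ∈ S, X ∈ F) → ⋂₀ S ∈ F

/-- `P_κ(λ)`: the collection of subsets of `λ` (represented as subsets of a canonical type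
of order type `λ`) of cardinality less than `κ`. -/
def Pkl (κ lam : Cardinal.{0}) : Set (Set lam.ord.ToType) := {x | #x < κ}

/-- `F` is a fine filter on `P_κ(λ)`. -/
def IsFine (κ lam : Cardinal.{0}) (F : Set (Set (Set lam.ord.ToType))) : Prop :=
  ∀ a : lam.ord.ToType, {x | x ∈ Pkl κ lam ∧ a ∈ x} ∈ F

/-- `F` is a normal filter on `P_κ(λ)`. -/
def IsNormalOnPkl (κ lam : Cardinal.{0}) (F : Set (Set (Set lam.ord.ToType))) : Prop :=
  ∀ f : Set lam.ord.ToType → lam.ord.ToType,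
    {x | x ∈ Pkl κ lam ∧ f x ∈ x} ∈ F →
      ∃ a : lam.ord.ToType, {x | x ∈ Pkl κ lam ∧ f x = a} ∈ F

/-- `κ` is a measurable cardinal: `κ` is uncountable and carries a `κ`-complete
nonprincipal ultrafilter. -/
def IsMeasurableCard (κ : Cardinal.{0}) : Prop :=
  ℵ₀ < κ ∧ ∃ F : Set (Set κ.ord.ToType),
    IsUltrafilterOn Set.univ F ∧ IsKComplete κ F ∧
      ∀ a : κ.ord.ToType, ({a} : Set κ.ord.ToType) ∉ F

/-- `κ` is `λ` strongly compact: there is a `κ`-complete fine ultrafilter on `P_κ(λ)`. -/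
def IsLamStronglyCompact (κ lam : Cardinal.{0}) : Prop :=
  ∃ F : Set (Set (Set lam.ord.ToType)),
    IsUltrafilterOn (Pkl κ lam) F ∧ IsKComplete κ F ∧ IsFine κ lam F

/-- `κ` is strongly compact: `κ` is `λ` strongly compact for every `λ ≥ κ`. -/
def IsStronglyCompactCard (κ : Cardinal.{0}) : Prop :=
  ∀ lam : Cardinal.{0}, κ ≤ lam → IsLamStronglyCompact κ lam

/-- `κ` is `λ` supercompact: there is a `κ`-complete fine normal ultrafilter on `P_κ(λ)`. -/
def IsLamSupercompact (κ lam : Cardinal.{0}) : Prop :=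
  ∃ F : Set (Set (Set lam.ord.ToType)),
    IsUltrafilterOn (Pkl κ lam) F ∧ IsKComplete κ F ∧ IsFine κ lam F ∧
      IsNormalOnPkl κ lam F

/-- `κ` is supercompact: `κ` is `λ` supercompact for every `λ ≥ κ`. -/
def IsSupercompactCard (κ : Cardinal.{0}) : Prop :=
  ∀ lam : Cardinal.{0}, κ ≤ lam → IsLamSupercompact κ lam

/-!
Fix a `κ`-complete nonprincipal ultrafilter `U` on `κ`. For each `α < κ` pick a strongly compact
`γ_α ≥ |α|` below `κ` and a `γ_α`-complete fine ultrafilter `V_α` on `P_{γ_α}(λ) ⊆ P_κ(λ)`.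
The `U`-limit of the `V_α` is a fine ultrafilter on `P_κ(λ)`. It is `κ`-complete because a
measurable cardinal is a strong limit, so for every `δ < κ` we have `δ < |α| ≤ γ_α` for
`U`-almost every `α`, and for those `α` the ultrafilter `V_α` is `δ⁺`-complete.
-/

open Set

namespace IsUltrafilterOn

variable {α : Type} {A : Set α} {F : Set (Set α)}

theorem carrier_mem (hF : IsUltrafilterOn A F) : A ∈ F :=
  hF.2.1

theorem empty_notMem (hF : IsUltrafilterOn A F) : ∅ ∉ F :=
  hF.2.2.1

theorem mem_of_superset (hF : IsUltrafilterOn A F) {X Y : Set α} (hX : X ∈ F) (hYA : Y ⊆ A)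
    (hXY : X ⊆ Y) : Y ∈ F :=
  hF.2.2.2.1 X hX Y hYA hXY

theorem inter_mem (hF : IsUltrafilterOn A F) {X Y : Set α} (hX : X ∈ F) (hY : Y ∈ F) :
    X ∩ Y ∈ F :=
  hF.2.2.2.2.1 X hX Y hY

theorem diff_mem_of_notMem (hF : IsUltrafilterOn A F) {X : Set α} (hXA : X ⊆ A) (hX : X ∉ F) :
    A \ X ∈ F :=
  (hF.2.2.2.2.2 X hXA).resolve_left hX

theorem nonempty_of_mem (hF : IsUltrafilterOn A F) {X : Set α} (hX : X ∈ F) : X.Nonempty :=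
  nonempty_iff_ne_empty.2 fun h => hF.empty_notMem (h ▸ hX)

end IsUltrafilterOn

theorem IsKComplete.iInter_mem {α ι : Type} {κ : Cardinal} {F : Set (Set α)}
    (hF : IsUltrafilterOn univ F) (hc : IsKComplete κ F) (hι : #ι < κ) {s : ι → Set α}
    (hs : ∀ i, s i ∈ F) : ⋂ i, s i ∈ F := by
  cases isEmpty_or_nonempty ι
  · rw [iInter_of_empty]
    exact hF.carrier_mem
  · rw [← sInter_range]
    exact hc _ (range_nonempty s) (mk_range_le.trans_lt hι) (forall_mem_range.2 hs)

theorem Pkl_mono {θ κ : Cardinal.{0}} (h : θ ≤ κ) (lam : Cardinal.{0}) : Pkl θ lam ⊆ Pkl κ lam :=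
  fun _ hx => lt_of_lt_of_le hx h

section Nonprincipal

variable {α : Type} {κ : Cardinal.{0}} {U : Set (Set α)}

theorem compl_mem_of_mk_lt (hU : IsUltrafilterOn univ U) (hUc : IsKComplete κ U)
    (hUnp : ∀ a, ({a} : Set α) ∉ U) {S : Set α} (hS : #S < κ) : Sᶜ ∈ U := by
  have hsing : ∀ a : S, ({a.1}ᶜ : Set α) ∈ U := fun a => by
    rw [compl_eq_univ_sdiff]
    exact hU.diff_mem_of_notMem (subset_univ _) (hUnp a)
  convert hUc.iInter_mem hU hS hsing using 1
  ext x
  simp only [mem_compl_iff, mem_iInter, mem_singleton_iff, Subtype.forall]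
  exact ⟨fun hx a ha hxa => hx (hxa ▸ ha), fun h hx => h x hx rfl⟩

/-- Given `e : α ↪ Set μ`, `U` decides each of the `μ` bits `ξ ∈ e a`, and the decisions
single out one point of `α`. -/
theorem two_power_lt_mk (hU : IsUltrafilterOn univ U) (hUc : IsKComplete κ U)
    (hUnp : ∀ a, ({a} : Set α) ∉ U) {μ : Cardinal.{0}} (hμ : μ < κ) : 2 ^ μ < #α := by
  by_contra! h
  rw [← mk_out μ, ← mk_set, le_def] at h
  obtain ⟨e⟩ := h
  set s : Set μ.out := {ξ | {a | ξ ∈ e a} ∈ U}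
  have hbit : ∀ ξ, {a | ξ ∈ e a ↔ ξ ∈ s} ∈ U := by
    intro ξ
    by_cases hξ : ξ ∈ s
    · simp only [hξ, iff_true]
      exact hξ
    · simp only [hξ, iff_false]
      convert hU.diff_mem_of_notMem (subset_univ _) hξ using 1
      ext
      simp
  have hall : ⋂ ξ, {a | ξ ∈ e a ↔ ξ ∈ s} ∈ U :=
    hUc.iInter_mem hU ((mk_out μ).trans_lt hμ) hbit
  obtain ⟨a₀, ha₀⟩ := hU.nonempty_of_mem hall
  refine hUnp a₀ (hU.mem_of_superset hall (subset_univ _) fun a ha => ?_)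
  have hs : ∀ b ∈ ⋂ ξ, {a | ξ ∈ e a ↔ ξ ∈ s}, e b = s := fun b hb =>
    ext fun ξ => mem_iInter.1 hb ξ
  exact e.injective ((hs a ha).trans (hs a₀ ha₀).symm)

end Nonprincipal

theorem exists_mk_Iio_eq {κ δ : Cardinal.{0}} (hδ : δ < κ) :
    ∃ a : κ.ord.ToType, #(Iio a) = δ := by
  have hlt : δ.ord < Ordinal.type (α := κ.ord.ToType) (· < ·) := by
    rwa [Ordinal.type_toType, ord_lt_ord]
  refine ⟨Ordinal.enum (· < ·) ⟨δ.ord, hlt⟩, ?_⟩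
  have h := Ordinal.card_typein (α := κ.ord.ToType) (r := (· < ·))
    (Ordinal.enum (· < ·) ⟨δ.ord, hlt⟩)
  rw [Ordinal.typein_enum, card_ord] at h
  exact h.symm

theorem mk_Iio_ord_toType_lt {κ : Cardinal.{0}} (a : κ.ord.ToType) : #(Iio a) < κ := by
  simpa using mk_Iio_lt a

theorem setOf_lt_mk_Iio_mem {κ : Cardinal.{0}} {U : Set (Set κ.ord.ToType)}
    (hU : IsUltrafilterOn univ U) (hUc : IsKComplete κ U) (hUnp : ∀ a, ({a} : Set _) ∉ U)
    {δ : Cardinal.{0}} (hδ : δ < κ) : {a : κ.ord.ToType | δ < #(Iio a)} ∈ U := by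
  obtain ⟨a₀, ha₀⟩ := exists_mk_Iio_eq (κ := κ) (by simpa using two_power_lt_mk hU hUc hUnp hδ)
  refine hU.mem_of_superset (compl_mem_of_mk_lt hU hUc hUnp (mk_Iio_ord_toType_lt a₀))
    (subset_univ _) fun a ha => ?_
  calc δ < 2 ^ δ := cantor δ
    _ = #(Iio a₀) := ha₀.symm
    _ ≤ #(Iio a) := mk_le_mk_of_subset (Iio_subset_Iio (not_lt.1 ha))

/-- The `U`-limit of ultrafilters `V i` living on pieces `B i` of `A`. -/
def ultrafilterLimit {α β : Type} (A : Set α) (B : β → Set α) (U : Set (Set β))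
    (V : β → Set (Set α)) : Set (Set α) :=
  {X | X ⊆ A ∧ {i | X ∩ B i ∈ V i} ∈ U}

section UltrafilterLimit

variable {α β : Type} {A : Set α} {B : β → Set α} {U : Set (Set β)} {V : β → Set (Set α)}

theorem mem_ultrafilterLimit_of_forall (hU : IsUltrafilterOn univ U) {X : Set α} (hXA : X ⊆ A)
    (hX : ∀ i, X ∩ B i ∈ V i) : X ∈ ultrafilterLimit A B U V :=
  ⟨hXA, by simpa only [hX, ofPred_true] using hU.carrier_mem⟩

theorem isUltrafilterOn_ultrafilterLimit (hB : ∀ i, B i ⊆ A) (hU : IsUltrafilterOn univ U)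
    (hV : ∀ i, IsUltrafilterOn (B i) (V i)) : IsUltrafilterOn A (ultrafilterLimit A B U V) := by
  refine ⟨fun X hX => hX.1, ?_, ?_, ?_, ?_, ?_⟩
  · refine mem_ultrafilterLimit_of_forall hU subset_rfl fun i => ?_
    rw [inter_eq_right.2 (hB i)]
    exact (hV i).carrier_mem
  · rintro ⟨-, h⟩
    simp only [empty_inter, (hV _).empty_notMem, ofPred_false] at h
    exact hU.empty_notMem h
  · rintro X ⟨-, hX⟩ Y hYA hXY
    refine ⟨hYA, hU.mem_of_superset hX (subset_univ _) fun i hi => ?_⟩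
    exact (hV i).mem_of_superset hi inter_subset_right (inter_subset_inter_left _ hXY)
  · rintro X ⟨hXA, hX⟩ Y ⟨-, hY⟩
    refine ⟨inter_subset_left.trans hXA,
      hU.mem_of_superset (hU.inter_mem hX hY) (subset_univ _) fun i hi => ?_⟩
    rw [mem_ofPred_eq, inter_inter_distrib_right]
    exact (hV i).inter_mem hi.1 hi.2
  · intro X hXA
    by_cases hX : {i | X ∩ B i ∈ V i} ∈ U
    · exact Or.inl ⟨hXA, hX⟩
    refine Or.inr ⟨sdiff_subset, hU.mem_of_superset (hU.diff_mem_of_notMem (subset_univ _) hX)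
      (subset_univ _) fun i hi => ?_⟩
    have hpiece : (A \ X) ∩ B i = B i \ (X ∩ B i) := by
      ext x
      exact ⟨fun ⟨⟨_, hxX⟩, hx⟩ => ⟨hx, fun h => hxX h.1⟩,
        fun ⟨hx, hxX⟩ => ⟨⟨hB i hx, fun h => hxX ⟨h, hx⟩⟩, hx⟩⟩
    rw [mem_ofPred_eq, hpiece]
    exact (hV i).diff_mem_of_notMem inter_subset_right hi.2

/-- Fewer than `κ` limit-large sets are simultaneously `V i`-large for `U`-almost every `i`, and
`U`-almost every `V i` is complete enough to intersect them. -/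
theorem isKComplete_ultrafilterLimit {κ : Cardinal.{0}} (hU : IsUltrafilterOn univ U)
    (hUc : IsKComplete κ U) {θ : β → Cardinal.{0}} (hVc : ∀ i, IsKComplete (θ i) (V i))
    (hθ : ∀ δ < κ, {i | δ < θ i} ∈ U) : IsKComplete κ (ultrafilterLimit A B U V) := by
  rintro S ⟨X₀, hX₀⟩ hS hSmem
  refine ⟨(sInter_subset_of_mem hX₀).trans (hSmem X₀ hX₀).1, ?_⟩
  have hall : ⋂ X : S, {i | X.1 ∩ B i ∈ V i} ∈ U :=
    hUc.iInter_mem hU hS fun X => (hSmem X X.2).2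
  refine hU.mem_of_superset (hU.inter_mem (hθ _ hS) hall) (subset_univ _) fun i ⟨hi, hiS⟩ => ?_
  rw [mem_iInter] at hiS
  have hpiece : ⋂₀ S ∩ B i = ⋂₀ ((· ∩ B i) '' S) := by
    rw [sInter_image, biInter_inter ⟨X₀, hX₀⟩, sInter_eq_biInter]
  rw [mem_ofPred_eq, hpiece]
  exact hVc i _ ⟨_, mem_image_of_mem _ hX₀⟩ (mk_image_le.trans_lt hi)
    (forall_mem_image.2 fun X hX => hiS ⟨X, hX⟩)

end UltrafilterLimit

theorem isFine_ultrafilterLimit {β : Type} {κ lam : Cardinal.{0}} {U : Set (Set β)}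
    {V : β → Set (Set (Set lam.ord.ToType))} {θ : β → Cardinal.{0}} (hU : IsUltrafilterOn univ U)
    (hθ : ∀ i, θ i ≤ κ) (hV : ∀ i, IsFine (θ i) lam (V i)) :
    IsFine κ lam (ultrafilterLimit (Pkl κ lam) (fun i => Pkl (θ i) lam) U V) := fun a =>
  mem_ultrafilterLimit_of_forall hU (fun _ hx => hx.1) fun i => by
    convert hV i a using 1
    ext x
    exact ⟨fun ⟨⟨_, hax⟩, hx⟩ => ⟨hx, hax⟩, fun ⟨hx, hax⟩ => ⟨⟨Pkl_mono (hθ i) lam hx, hax⟩, hx⟩⟩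

/-- If `κ` is a measurable cardinal and the set of strongly compact
cardinals below `κ` is unbounded in `κ`, then `κ` is strongly compact. -/
theorem measurable_limit_of_stronglyCompact_isStronglyCompact (κ : Cardinal.{0})
    (hmeas : IsMeasurableCard κ)
    (hunb : ∀ β : Cardinal.{0}, β < κ →
      ∃ γ : Cardinal.{0}, β ≤ γ ∧ γ < κ ∧ IsStronglyCompactCard γ) :
    IsStronglyCompactCard κ := by
  intro lam hlam
  obtain ⟨-, U, hU, hUc, hUnp⟩ := hmeas
  choose γ hγ hγκ hγsc using fun a : κ.ord.ToType => hunb _ (mk_Iio_ord_toType_lt a)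
  choose V hV hVc hVf using fun a => hγsc a lam ((hγκ a).le.trans hlam)
  have hγ_large : ∀ δ < κ, {a | δ < γ a} ∈ U := fun δ hδ =>
    hU.mem_of_superset (setOf_lt_mk_Iio_mem hU hUc hUnp hδ) (subset_univ _)
      fun a ha => lt_of_lt_of_le ha (hγ a)
  exact ⟨ultrafilterLimit (Pkl κ lam) (fun a => Pkl (γ a) lam) U V,
    isUltrafilterOn_ultrafilterLimit (fun a => Pkl_mono (hγκ a).le lam) hU hV,
    isKComplete_ultrafilterLimit hU hUc hVc hγ_large,
    isFine_ultrafilterLimit hU (fun a => (hγκ a).le) hVf⟩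
end

section
/- If κ is the least measurable cardinal such that the set of strongly compact cardinals below κ is unbounded in κ, then κ is not 2^κ supercompact, i.e., there is no κ-complete fine normal ultrafilter on P_κ(2^κ). -/
open Cardinal

/-!
Let `U` be a `κ`-complete fine normal ultrafilter on `P_κ(2^κ)`, and code the subsets of `κ` by
elements of `2^κ`. For `U`-almost every `x`, `x ∩ κ` is an ordinal `κ_x < κ`, and the normal
measure `{A ⊆ κ | κ_x ∈ A for almost all x}` on `κ` reflects to `x`: the sets `B ⊆ κ_x` containing
`A ∩ κ_x` for some code `A ∈ x` with `κ_x ∈ A` form a `|κ_x|`-complete nonprincipal ultrafilter.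
Each of these properties holds almost everywhere because normality presses a counterexample down to
a fixed parameter, whose code fineness then puts into almost every `x`. Since a measurable `κ` is a
limit cardinal, strongly compact cardinals also stay unbounded below `|κ_x|`, so `|κ_x|` is a
smaller measurable limit of strongly compact cardinals.
-/

open Cardinal Set Filter Ordinal

namespace IsUltrafilterOn

variable {α : Type} {A : Set α} {F : Set (Set α)}

def toFilter (h : IsUltrafilterOn A F) : Filter α where
  sets := {S | S ∩ A ∈ F}
  univ_sets := by rw [mem_ofPred_eq, univ_inter]; exact h.2.1
  sets_of_superset hS hST := h.2.2.2.1 _ hS _ inter_subset_right (inter_subset_inter_left _ hST)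
  inter_sets {S T} hS hT := by
    change S ∩ T ∩ A ∈ F
    rw [inter_inter_distrib_right]
    exact h.2.2.2.2.1 _ hS _ hT

theorem compl_notMem_toFilter_iff (h : IsUltrafilterOn A F) (S : Set α) :
    Sᶜ ∉ h.toFilter ↔ S ∈ h.toFilter := by
  change Sᶜ ∩ A ∉ F ↔ S ∩ A ∈ F
  have hdiff : A \ (S ∩ A) = Sᶜ ∩ A := by ext; simp [and_comm]
  refine ⟨fun hc => (h.2.2.2.2.2 _ inter_subset_right).resolve_right (hdiff ▸ hc),
    fun hS hc => h.2.2.1 ?_⟩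
  have := h.2.2.2.2.1 _ hS _ hc
  rwa [← inter_inter_distrib_right, inter_compl_self, empty_inter] at this

def toUltrafilter (h : IsUltrafilterOn A F) : Ultrafilter α :=
  .ofComplNotMemIff h.toFilter h.compl_notMem_toFilter_iff

theorem mem_toUltrafilter (h : IsUltrafilterOn A F) {S : Set α} :
    S ∈ h.toUltrafilter ↔ S ∩ A ∈ F := Iff.rfl

theorem cardinalInterFilter_toUltrafilter (h : IsUltrafilterOn A F) {κ : Cardinal}
    (hκ : IsKComplete κ F) : CardinalInterFilter (h.toUltrafilter : Filter α) κ where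
  cardinal_sInter_mem S hS hmem := by
    rcases S.eq_empty_or_nonempty with rfl | hne
    · simp
    rw [Ultrafilter.mem_coe, mem_toUltrafilter, sInter_eq_biInter, ← biInter_inter hne,
      ← sInter_image]
    exact hκ _ (hne.image _) (mk_image_le.trans_lt hS) (forall_mem_image.2 hmem)

theorem eventually_toUltrafilter_iff (h : IsUltrafilterOn A F) {P : α → Prop} :
    (∀ᶠ x in h.toUltrafilter, P x) ↔ {x | x ∈ A ∧ P x} ∈ F := by
  rw [Filter.eventually_iff, Ultrafilter.mem_coe, h.mem_toUltrafilter, inter_comm]; rfl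

end IsUltrafilterOn

theorem Ultrafilter.isUltrafilterOn_univ {α : Type} (U : Ultrafilter α) :
    IsUltrafilterOn univ {S | S ∈ U} :=
  ⟨fun _ _ => subset_univ _, univ_mem, U.empty_notMem,
    fun _ hX _ _ hXY => mem_of_superset hX hXY, fun _ hX _ hY => inter_mem hX hY, fun X _ => by
      rw [mem_ofPred_eq, mem_ofPred_eq, ← compl_eq_univ_sdiff]; exact U.mem_or_compl_mem X⟩

theorem isKComplete_of_cardinalInterFilter {α : Type} {κ : Cardinal} {l : Filter α}
    [CardinalInterFilter l κ] : IsKComplete κ {S | S ∈ l} :=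
  fun _ _ hS hmem => CardinalInterFilter.cardinal_sInter_mem _ hS hmem

theorem isMeasurableCard_iff {κ : Cardinal.{0}} : IsMeasurableCard κ ↔ ℵ₀ < κ ∧
    ∃ U : Ultrafilter κ.ord.ToType,
      CardinalInterFilter (U : Filter κ.ord.ToType) κ ∧ ∀ a, {a} ∉ U := by
  refine ⟨fun ⟨hκ, F, hF, hc, hF1⟩ => ⟨hκ, hF.toUltrafilter,
    hF.cardinalInterFilter_toUltrafilter hc,
    fun a ha => hF1 a (by rwa [hF.mem_toUltrafilter, inter_univ] at ha)⟩, ?_⟩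
  rintro ⟨hκ, U, hU, hU1⟩
  exact ⟨hκ, {S | S ∈ U}, U.isUltrafilterOn_univ, isKComplete_of_cardinalInterFilter, hU1⟩

theorem isMeasurableCard_of_ultrafilter {α : Type} {κ : Cardinal.{0}} (U : Ultrafilter α)
    [CardinalInterFilter (U : Filter α) κ] {s : Set α} (hs : s ∈ U) (hsκ : #s = κ)
    (hκ : ℵ₀ < κ) (hU : ∀ a, {a} ∉ U) : IsMeasurableCard κ := by
  obtain ⟨e⟩ : Nonempty (κ.ord.ToType ≃ s) := Cardinal.eq.1 (by simp [hsκ])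
  have hinj : Function.Injective (fun y => (e y : α)) := Subtype.val_injective.comp e.injective
  have hrange : range (fun y => (e y : α)) ∈ U := by
    rwa [range_comp' Subtype.val, e.range_eq_univ, image_univ, Subtype.range_coe]
  refine isMeasurableCard_iff.2 ⟨hκ, U.comap hinj hrange, ?_, fun a ha => hU (e a) ?_⟩
  · rw [Ultrafilter.coe_comap]; infer_instance
  · rwa [Ultrafilter.mem_comap, image_singleton] at ha

theorem Ultrafilter.exists_singleton_mem_of_mk_le_two_pow {α : Type} {κ μ : Cardinal.{0}}
    (U : Ultrafilter α) [CardinalInterFilter (U : Filter α) κ] (hμ : μ < κ)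
    (hα : #α ≤ 2 ^ μ) : ∃ a, {a} ∈ U := by
  obtain ⟨e⟩ : Nonempty (α ↪ Set μ.ord.ToType) := by
    rwa [← Cardinal.le_def, mk_set, mk_ord_toType]
  set B : Set μ.ord.ToType := {i | ∀ᶠ a in U, i ∈ e a}
  have hcoord : ∀ i, ∀ᶠ a in U, (i ∈ e a ↔ i ∈ B) := by
    intro i
    by_cases hi : i ∈ B
    · exact hi.mono fun a ha => iff_of_true ha hi
    · exact (Ultrafilter.eventually_not.2 hi).mono fun a ha => iff_of_false ha hi
  have heq : ∀ᶠ a in U, e a = B :=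
    ((eventually_cardinal_forall (by rwa [mk_ord_toType])).2 hcoord).mono fun _ h => Set.ext h
  obtain ⟨a, ha⟩ := heq.exists
  exact ⟨a, mem_of_superset heq fun b hb => e.injective (hb.trans ha.symm)⟩

theorem IsMeasurableCard.two_pow_lt {κ μ : Cardinal.{0}} (h : IsMeasurableCard κ)
    (hμ : μ < κ) : 2 ^ μ < κ := by
  obtain ⟨-, U, hU, hU1⟩ := isMeasurableCard_iff.1 h
  by_contra! hle
  obtain ⟨a, ha⟩ := U.exists_singleton_mem_of_mk_le_two_pow hμ (by rwa [mk_ord_toType])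
  exact hU1 a ha

theorem IsMeasurableCard.succ_lt {κ μ : Cardinal.{0}} (h : IsMeasurableCard κ) (hμ : μ < κ) :
    Order.succ μ < κ :=
  (Order.succ_le_of_lt (cantor μ)).trans_lt (h.two_pow_lt hμ)

namespace Ultrafilter

variable {T : Type}

def IsFine (U : Ultrafilter (Set T)) : Prop := ∀ a : T, ∀ᶠ x : Set T in U, a ∈ x

def IsNormal (U : Ultrafilter (Set T)) : Prop :=
  ∀ f : Set T → T, (∀ᶠ x in U, f x ∈ x) → ∃ a, ∀ᶠ x in U, f x = a

variable {U : Ultrafilter (Set T)}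

theorem IsNormal.eventually_forall_mem (hU : U.IsNormal) {P : T → Set T → Prop}
    (h : ∀ t, ∀ᶠ x in U, P t x) : ∀ᶠ x in U, ∀ t ∈ x, P t x := by
  by_contra hbad
  have hex : ∀ᶠ x in U, ∃ t, t ∈ x ∧ ¬P t x :=
    (eventually_not.2 hbad).mono fun x hx => by simpa only [not_forall, exists_prop] using hx
  obtain ⟨f, hf⟩ := hex.choice
  obtain ⟨a, ha⟩ := hU f (hf.mono fun _ => And.left)
  obtain ⟨x, ⟨-, hfx⟩, hxa, hPx⟩ := (hf.and (ha.and (h a))).exists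
  exact hfx (hxa ▸ hPx)

theorem IsNormal.eventually_forall_mem_of_mem (hU : U.IsNormal) {S : Set T}
    {P : T → Set T → Prop} (h : ∀ t ∈ S, ∀ᶠ x in U, P t x) :
    ∀ᶠ x in U, ∀ t ∈ x, t ∈ S → P t x := by
  refine hU.eventually_forall_mem fun t => ?_
  by_cases ht : t ∈ S
  · exact (h t ht).mono fun _ hx _ => hx
  · exact .of_forall fun _ h => absurd h ht

theorem IsNormal.exists_eventually_inter_eq (hU : U.IsNormal) (B : Set T → Set T) :
    ∃ A, ∀ᶠ x in U, B x ∩ x = A ∩ x := by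
  refine ⟨{t | ∀ᶠ x in U, t ∈ B x}, ?_⟩
  have hcoord : ∀ t, ∀ᶠ x in U, (t ∈ B x ↔ ∀ᶠ y in U, t ∈ B y) := by
    intro t
    by_cases ht : ∀ᶠ y in U, t ∈ B y
    · exact ht.mono fun x hx => iff_of_true hx ht
    · exact (eventually_not.2 ht).mono fun x hx => iff_of_false hx ht
  filter_upwards [hU.eventually_forall_mem hcoord] with x hx
  ext t
  exact ⟨fun ⟨htB, htx⟩ => ⟨(hx t htx).1 htB, htx⟩,
    fun ⟨htA, htx⟩ => ⟨(hx t htx).2 htA, htx⟩⟩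

theorem IsNormal.exists_eventually_eq {κ : Cardinal.{0}}
    [CardinalInterFilter (U : Filter (Set T)) κ] (hU : U.IsNormal) {I : Type} (hI : #I < κ)
    {g : Set T → I → T}
    (hg : ∀ᶠ x in U, ∀ i, g x i ∈ x) : ∃ a : I → T, ∀ᶠ x in U, g x = a := by
  choose a ha using fun i => hU (g · i) (hg.mono fun _ hx => hx i)
  exact ⟨a, ((eventually_cardinal_forall hI).2 ha).mono fun _ => funext⟩

theorem IsFine.eventually_subset {κ : Cardinal.{0}}
    [CardinalInterFilter (U : Filter (Set T)) κ] (hU : U.IsFine) {S : Set T} (hS : #S < κ) :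
    ∀ᶠ x in U, S ⊆ x :=
  (eventually_cardinal_ball hS).2 fun a _ => hU a

end Ultrafilter

theorem IsLamSupercompact.exists_ultrafilter {κ lam : Cardinal.{0}}
    (h : IsLamSupercompact κ lam) : ∃ U : Ultrafilter (Set lam.ord.ToType),
      CardinalInterFilter (U : Filter (Set lam.ord.ToType)) κ ∧
      (∀ᶠ x : Set lam.ord.ToType in U, #x < κ) ∧ U.IsFine ∧ U.IsNormal := by
  obtain ⟨F, hF, hc, hfine, hnormal⟩ := h
  refine ⟨hF.toUltrafilter, hF.cardinalInterFilter_toUltrafilter hc, ?_, fun a => ?_,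
    fun f hf => ?_⟩
  · exact hF.eventually_toUltrafilter_iff.2 (by simpa [Pkl] using hF.2.1)
  · exact hF.eventually_toUltrafilter_iff.2 (hfine a)
  · obtain ⟨a, ha⟩ := hnormal f (hF.eventually_toUltrafilter_iff.1 hf)
    exact ⟨a, hF.eventually_toUltrafilter_iff.2 ha⟩

theorem Ordinal.mk_Iio_toType {o : Ordinal.{0}} (t : o.ToType) :
    #(Iio t) = (ToType.mk.symm t : Ordinal).card :=
  (card_typein (r := ((· < ·) : o.ToType → o.ToType → Prop)) t).symm

theorem Ordinal.exists_mk_Iio_toType_eq {o : Ordinal.{0}} {μ : Cardinal.{0}} (hμ : μ < o.card) :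
    ∃ t : o.ToType, #(Iio t) = μ :=
  ⟨ToType.mk ⟨μ.ord, (ord_lt_ord.2 hμ).trans_le (ord_card_le o)⟩, by
    rw [mk_Iio_toType, OrderIso.symm_apply_apply, card_ord]⟩

theorem lt_of_mk_Iio_lt_mk_Iio {α : Type} [LinearOrder α] {a b : α}
    (h : #(Iio a) < #(Iio b)) : a < b :=
  lt_of_not_ge fun hba => h.not_ge (mk_le_mk_of_subset (Iio_subset_Iio hba))

theorem Ordinal.exists_lt_mk_Iio_toType_eq {o : Ordinal.{0}} {c : o.ToType} {μ : Cardinal.{0}}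
    (hμ : μ < #(Iio c)) : ∃ d < c, #(Iio d) = μ := by
  have hμo : μ < o.card := hμ.trans_le ((mk_set_le _).trans (mk_toType o).le)
  obtain ⟨d, hd⟩ := exists_mk_Iio_toType_eq hμo
  exact ⟨d, lt_of_mk_Iio_lt_mk_Iio (hd ▸ hμ), hd⟩

noncomputable section

/-- `2 ^ κ` as a well-order: the segment below `kappaPt κ` plays the role of `κ`, and through
`decode` the elements code the subsets of that segment. -/
abbrev TwoPow (κ : Cardinal.{0}) : Type := ((2 : Cardinal.{0}) ^ κ).ord.ToType

def kappaPt (κ : Cardinal.{0}) : TwoPow κ := ToType.mk ⟨κ.ord, ord_lt_ord.2 (cantor κ)⟩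

variable {κ : Cardinal.{0}}

theorem mk_Iio_kappaPt : #(Iio (kappaPt κ)) = κ := by
  rw [kappaPt, mk_Iio_toType, OrderIso.symm_apply_apply, card_ord]

theorem mk_Iio_lt_of_lt_kappaPt {t : TwoPow κ} (ht : t < kappaPt κ) : #(Iio t) < κ := by
  rw [mk_Iio_toType, ← lt_ord]
  have := ToType.mk.symm.lt_iff_lt.2 ht
  rwa [kappaPt, OrderIso.symm_apply_apply, ← Subtype.coe_lt_coe] at this

variable (κ) in
def decode : TwoPow κ ≃ Set (Iio (kappaPt κ)) :=
  (Cardinal.eq.1 (by rw [mk_set, mk_Iio_kappaPt, mk_ord_toType])).some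

def codedSet (α : TwoPow κ) : Set (TwoPow κ) := Subtype.val '' decode κ α

def code (A : Set (TwoPow κ)) : TwoPow κ := (decode κ).symm (Subtype.val ⁻¹' A)

theorem codedSet_subset (α : TwoPow κ) : codedSet α ⊆ Iio (kappaPt κ) :=
  Subtype.coe_image_subset _ _

theorem codedSet_code (A : Set (TwoPow κ)) : codedSet (code A) = A ∩ Iio (kappaPt κ) := by
  rw [codedSet, code, Equiv.apply_symm_apply, Subtype.image_preimage_coe, inter_comm]

open Classical in
/-- The ordinal `κ_x = x ∩ κ` (see `IsKappaInitial.lt_kappaOf_iff`). -/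
def kappaOf (x : Set (TwoPow κ)) : TwoPow κ :=
  if h : (Iio (kappaPt κ) \ x).Nonempty then wellFounded_lt.min _ h else kappaPt κ

theorem diff_nonempty_of_mk_lt {x : Set (TwoPow κ)} (hx : #x < κ) :
    (Iio (kappaPt κ) \ x).Nonempty :=
  nonempty_of_not_subset fun hsub => (mk_le_mk_of_subset hsub).not_gt (mk_Iio_kappaPt ▸ hx)

theorem kappaOf_mem_diff {x : Set (TwoPow κ)} (hx : #x < κ) :
    kappaOf x ∈ Iio (kappaPt κ) \ x := by
  rw [kappaOf, dif_pos (diff_nonempty_of_mk_lt hx)]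
  exact wellFounded_lt.min_mem _ _

structure IsKappaInitial (x : Set (TwoPow κ)) : Prop where
  mk_lt : #x < κ
  Iio_subset : ∀ t ∈ x, t < kappaPt κ → Iio t ⊆ x

namespace IsKappaInitial

variable {x : Set (TwoPow κ)}

theorem kappaOf_lt (hx : IsKappaInitial x) : kappaOf x < kappaPt κ :=
  (kappaOf_mem_diff hx.mk_lt).1

theorem kappaOf_notMem (hx : IsKappaInitial x) : kappaOf x ∉ x := (kappaOf_mem_diff hx.mk_lt).2

theorem lt_kappaOf_iff (hx : IsKappaInitial x) {t : TwoPow κ} :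
    t < kappaOf x ↔ t ∈ x ∧ t < kappaPt κ := by
  constructor
  · intro ht
    have htκ := ht.trans hx.kappaOf_lt
    refine ⟨?_, htκ⟩
    by_contra htx
    rw [kappaOf, dif_pos (diff_nonempty_of_mk_lt hx.mk_lt)] at ht
    exact wellFounded_lt.not_lt_min _ (show t ∈ Iio (kappaPt κ) \ x from ⟨htκ, htx⟩) ht
  · rintro ⟨htx, htκ⟩
    by_contra! hle
    rcases hle.lt_or_eq with hlt | heq
    · exact hx.kappaOf_notMem (hx.Iio_subset t htx htκ hlt)
    · exact hx.kappaOf_notMem (heq ▸ htx)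

theorem Iio_kappaOf_subset (hx : IsKappaInitial x) : Iio (kappaOf x) ⊆ x :=
  fun _ ht => (hx.lt_kappaOf_iff.1 ht).1

end IsKappaInitial

/-- The measure-one sets of the ultrafilter on `κ_x` that `x` reflects from the normal measure
on `κ`. -/
def reflectSets (x : Set (TwoPow κ)) : Set (Set (TwoPow κ)) :=
  {B | ∃ α ∈ x, kappaOf x ∈ codedSet α ∧ codedSet α ∩ Iio (kappaOf x) ⊆ B}

/-- Families are indexed by initial segments of `κ_x` so that normality can press a family down
to a fixed index set. -/
def ReflectIInterClosed (x : Set (TwoPow κ)) : Prop :=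
  ∀ d < kappaOf x, ∀ g : Iio d → TwoPow κ,
    (∀ s, g s ∈ x ∧ kappaOf x ∈ codedSet (g s)) → ⋂ s, codedSet (g s) ∈ reflectSets x

section reflectSets

variable {x : Set (TwoPow κ)}

theorem reflectSets_mono {B C : Set (TwoPow κ)} (hB : B ∈ reflectSets x) (hBC : B ⊆ C) :
    C ∈ reflectSets x :=
  let ⟨α, hαx, hc, hαB⟩ := hB
  ⟨α, hαx, hc, hαB.trans hBC⟩

theorem sInter_mem_reflectSets
    (hC : ReflectIInterClosed x) {S : Set (Set (TwoPow κ))} (hS : #S < #(Iio (kappaOf x)))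
    (hSR : S ⊆ reflectSets x) :
    ⋂₀ S ∈ reflectSets x := by
  obtain ⟨d, hd, hdS⟩ := exists_lt_mk_Iio_toType_eq hS
  obtain ⟨e⟩ : Nonempty (Iio d ≃ S) := Cardinal.eq.1 hdS
  choose w hwx hwc hwB using fun B : S => hSR B.2
  obtain ⟨β, hβx, hβc, hβ⟩ := hC d hd (fun s => w (e s)) fun s => ⟨hwx _, hwc _⟩
  refine ⟨β, hβx, hβc, fun t ht B hB => hwB ⟨B, hB⟩ ⟨?_, ht.2⟩⟩
  simpa using mem_iInter.1 (hβ ht) (e.symm ⟨B, hB⟩)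

theorem isMeasurableCard_mk_Iio_kappaOf (hℵ : ℵ₀ < #(Iio (kappaOf x)))
    (hC : ReflectIInterClosed x) (hult : ∀ B, B ∈ reflectSets x ∨ Bᶜ ∈ reflectSets x)
    (hsing : ∀ s, {s} ∉ reflectSets x) :
    IsMeasurableCard #(Iio (kappaOf x)) := by
  have h2 : (2 : Cardinal) < #(Iio (kappaOf x)) := (natCast_lt_aleph0 (n := 2)).trans hℵ
  have hinter : ∀ S : Set (Set (TwoPow κ)), #S < #(Iio (kappaOf x)) → S ⊆ reflectSets x →
      ⋂₀ S ∈ reflectSets x := fun _ => sInter_mem_reflectSets hC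
  let F := Filter.ofCardinalInter (reflectSets x) h2 hinter fun _ _ => reflectSets_mono
  have hempty : ∅ ∉ F := fun h => hsing (kappaOf x) (reflectSets_mono h (empty_subset _))
  let V := Ultrafilter.ofComplNotMemIff F fun B =>
    ⟨(hult B).resolve_right, fun hB hBc => hempty (by simpa using inter_mem hB hBc)⟩
  have : CardinalInterFilter (V : Filter (TwoPow κ)) #(Iio (kappaOf x)) :=
    Filter.cardinalInter_ofCardinalInter _ h2 hinter _
  obtain ⟨α, hαx, hc, -⟩ : Set.univ ∈ reflectSets x := univ_mem (f := F)
  exact isMeasurableCard_of_ultrafilter V ⟨α, hαx, hc, inter_subset_right⟩ rfl hℵ hsing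

namespace IsKappaInitial

theorem mem_reflectSets_of_code_mem (hx : IsKappaInitial x) {A B : Set (TwoPow κ)}
    (hA : code A ∈ x) (hc : kappaOf x ∈ A) (hAB : A ∩ Iio (kappaOf x) ⊆ B) :
    B ∈ reflectSets x := by
  refine ⟨code A, hA, ?_, ?_⟩ <;> rw [codedSet_code]
  · exact ⟨hc, hx.kappaOf_lt⟩
  · exact fun e he => hAB ⟨he.1.1, he.2⟩

theorem mem_or_compl_mem_reflectSets (hx : IsKappaInitial x) {A B : Set (TwoPow κ)}
    (hAB : B ∩ x = A ∩ x) (hA : code A ∈ x) (hAc : code (Iio (kappaPt κ) \ A) ∈ x) :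
    B ∈ reflectSets x ∨ Bᶜ ∈ reflectSets x := by
  by_cases hc : kappaOf x ∈ A
  · refine .inl (hx.mem_reflectSets_of_code_mem hA hc fun e ⟨heA, he⟩ => ?_)
    exact ((Set.ext_iff.1 hAB e).2 ⟨heA, hx.Iio_kappaOf_subset he⟩).1
  · refine .inr (hx.mem_reflectSets_of_code_mem hAc ⟨hx.kappaOf_lt, hc⟩ ?_)
    exact fun e ⟨⟨_, heA⟩, he⟩ heB =>
      heA ((Set.ext_iff.1 hAB e).1 ⟨heB, hx.Iio_kappaOf_subset he⟩).1

end IsKappaInitial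

end reflectSets

def IsCofinalBelow (Q : Cardinal.{0} → Prop) (κ : Cardinal.{0}) : Prop :=
  ∀ β < κ, ∃ γ, β ≤ γ ∧ γ < κ ∧ Q γ

section Eventually

variable {U : Ultrafilter (Set (TwoPow κ))}

theorem eventually_isKappaInitial [CardinalInterFilter (U : Filter (Set (TwoPow κ))) κ]
    (hsmall : ∀ᶠ x : Set (TwoPow κ) in U, #x < κ) (hfine : U.IsFine) (hnormal : U.IsNormal) :
    ∀ᶠ x : Set (TwoPow κ) in U, IsKappaInitial x := by
  have h := hnormal.eventually_forall_mem_of_mem (S := Iio (kappaPt κ)) fun t ht =>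
    hfine.eventually_subset (mk_Iio_lt_of_lt_kappaPt ht)
  filter_upwards [hsmall, h] with x hx hIio
  exact ⟨hx, hIio⟩

theorem eventually_lt_kappaOf (hinit : ∀ᶠ x : Set (TwoPow κ) in U, IsKappaInitial x)
    (hfine : U.IsFine) {t : TwoPow κ} (ht : t < kappaPt κ) :
    ∀ᶠ x : Set (TwoPow κ) in U, t < kappaOf x := by
  filter_upwards [hinit, hfine t] with x hx htx
  exact hx.lt_kappaOf_iff.2 ⟨htx, ht⟩

theorem eventually_lt_mk_Iio_kappaOf (hinit : ∀ᶠ x : Set (TwoPow κ) in U, IsKappaInitial x)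
    (hfine : U.IsFine) {μ : Cardinal.{0}} (hμ : Order.succ μ < κ) :
    ∀ᶠ x : Set (TwoPow κ) in U, μ < #(Iio (kappaOf x)) := by
  obtain ⟨t, ht⟩ := exists_mk_Iio_toType_eq (o := ((2 : Cardinal.{0}) ^ κ).ord)
    (μ := Order.succ μ) (by rw [card_ord]; exact hμ.trans (cantor κ))
  have htκ : t < kappaPt κ := lt_of_mk_Iio_lt_mk_Iio (by rwa [ht, mk_Iio_kappaPt])
  filter_upwards [eventually_lt_kappaOf hinit hfine htκ] with x hx
  exact Order.succ_le_iff.1 (ht ▸ mk_le_mk_of_subset (Iio_subset_Iio hx.le))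

theorem eventually_singleton_notMem_reflectSets
    (hinit : ∀ᶠ x : Set (TwoPow κ) in U, IsKappaInitial x) (hfine : U.IsFine)
    (hnormal : U.IsNormal) : ∀ᶠ x : Set (TwoPow κ) in U, ∀ s, {s} ∉ reflectSets x := by
  have h : ∀ α, ∀ᶠ x : Set (TwoPow κ) in U,
      kappaOf x ∈ codedSet α → (codedSet α ∩ Iio (kappaOf x)).Nontrivial := by
    intro α
    rcases (codedSet α).subsingleton_or_nontrivial with hs | ⟨a, ha, b, hb, hab⟩
    · rcases (codedSet α).eq_empty_or_nonempty with h0 | ⟨a, ha⟩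
      · exact .of_forall fun x hc => absurd (h0 ▸ hc) (notMem_empty _)
      · filter_upwards [hinit, hfine a] with x hx hax hc
        exact absurd (hs hc ha ▸ hax) hx.kappaOf_notMem
    · filter_upwards [eventually_lt_kappaOf hinit hfine (codedSet_subset α ha),
        eventually_lt_kappaOf hinit hfine (codedSet_subset α hb)] with x hxa hxb _
      exact ⟨a, ⟨ha, hxa⟩, b, ⟨hb, hxb⟩, hab⟩
  filter_upwards [hnormal.eventually_forall_mem h] with x hx s ⟨α, hαx, hc, hsub⟩
  exact (hx α hαx hc).not_subset_singleton hsub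

theorem eventually_mem_or_compl_mem_reflectSets
    (hinit : ∀ᶠ x : Set (TwoPow κ) in U, IsKappaInitial x) (hfine : U.IsFine)
    (hnormal : U.IsNormal) :
    ∀ᶠ x : Set (TwoPow κ) in U, ∀ B, B ∈ reflectSets x ∨ Bᶜ ∈ reflectSets x := by
  by_contra hbad
  obtain ⟨B, hB⟩ :=
    ((Ultrafilter.eventually_not.2 hbad).mono fun _ hx => not_forall.1 hx).choice
  obtain ⟨A, hA⟩ := hnormal.exists_eventually_inter_eq B
  obtain ⟨x, hxB, hxA, hx, hAx, hAcx⟩ := (hB.and (hA.and (hinit.and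
    ((hfine (code A)).and (hfine (code (Iio (kappaPt κ) \ A))))))).exists
  exact hxB (hx.mem_or_compl_mem_reflectSets hxA hAx hAcx)

theorem eventually_iInter_mem_reflectSets [CardinalInterFilter (U : Filter (Set (TwoPow κ))) κ]
    (hinit : ∀ᶠ x : Set (TwoPow κ) in U, IsKappaInitial x) (hfine : U.IsFine)
    (hnormal : U.IsNormal) : ∀ᶠ x : Set (TwoPow κ) in U, ReflectIInterClosed x := by
  have h : ∀ d ∈ Iio (kappaPt κ), ∀ᶠ x : Set (TwoPow κ) in U,
      ∀ g : Iio d → TwoPow κ, (∀ s, g s ∈ x ∧ kappaOf x ∈ codedSet (g s)) →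
        ⋂ s, codedSet (g s) ∈ reflectSets x := by
    intro d hd
    by_contra hbad
    obtain ⟨g, hg⟩ := ((Ultrafilter.eventually_not.2 hbad).mono fun _ hx => by
      push Not at hx; exact hx).choice
    obtain ⟨a, ha⟩ := hnormal.exists_eventually_eq (mk_Iio_lt_of_lt_kappaPt hd)
      (hg.mono fun _ h s => (h.1 s).1)
    obtain ⟨x, ⟨hgx, hbadx⟩, hxa, hx, hcode⟩ :=
      (hg.and (ha.and (hinit.and (hfine (code (⋂ s, codedSet (a s))))))).exists
    rw [hxa] at hgx hbadx
    exact hbadx (hx.mem_reflectSets_of_code_mem hcode (mem_iInter.2 fun s => (hgx s).2)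
      inter_subset_left)
  filter_upwards [hnormal.eventually_forall_mem_of_mem h, hinit] with x hx hxi d hd
  exact hx d (hxi.lt_kappaOf_iff.1 hd).1 (hxi.lt_kappaOf_iff.1 hd).2

theorem eventually_isCofinalBelow_mk_Iio_kappaOf
    (hinit : ∀ᶠ x : Set (TwoPow κ) in U, IsKappaInitial x) (hfine : U.IsFine)
    (hnormal : U.IsNormal) (hlim : ∀ μ < κ, Order.succ μ < κ)
    {Q : Cardinal.{0} → Prop} (hQ : IsCofinalBelow Q κ) :
    ∀ᶠ x : Set (TwoPow κ) in U, IsCofinalBelow Q #(Iio (kappaOf x)) := by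
  have h : ∀ t ∈ Iio (kappaPt κ), ∀ᶠ x : Set (TwoPow κ) in U,
      ∃ γ, #(Iio t) ≤ γ ∧ γ < #(Iio (kappaOf x)) ∧ Q γ := by
    intro t ht
    obtain ⟨γ, htγ, hγ, hQγ⟩ := hQ _ (mk_Iio_lt_of_lt_kappaPt ht)
    filter_upwards [eventually_lt_mk_Iio_kappaOf hinit hfine (hlim γ hγ)] with x hx
    exact ⟨γ, htγ, hx, hQγ⟩
  filter_upwards [hnormal.eventually_forall_mem_of_mem h, hinit] with x hx hxi β hβ
  obtain ⟨t, htc, rfl⟩ := exists_lt_mk_Iio_toType_eq hβ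
  exact hx t (hxi.lt_kappaOf_iff.1 htc).1 (hxi.lt_kappaOf_iff.1 htc).2

end Eventually

theorem IsLamSupercompact.exists_lt_isMeasurableCard_isCofinalBelow
    (h : IsLamSupercompact κ (2 ^ κ)) (hκ : IsMeasurableCard κ) {Q : Cardinal.{0} → Prop}
    (hQ : IsCofinalBelow Q κ) : ∃ κ' < κ, IsMeasurableCard κ' ∧ IsCofinalBelow Q κ' := by
  obtain ⟨U, hU, hsmall, hfine, hnormal⟩ := h.exists_ultrafilter
  have hinit := eventually_isKappaInitial hsmall hfine hnormal
  have hlim : ∀ μ < κ, Order.succ μ < κ := fun _ => hκ.succ_lt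
  obtain ⟨x, hx, hℵ, hC, hult, hsing, hQx⟩ := (hinit.and
    ((eventually_lt_mk_Iio_kappaOf hinit hfine (hlim _ hκ.1)).and
    ((eventually_iInter_mem_reflectSets hinit hfine hnormal).and
    ((eventually_mem_or_compl_mem_reflectSets hinit hfine hnormal).and
    ((eventually_singleton_notMem_reflectSets hinit hfine hnormal).and
    (eventually_isCofinalBelow_mk_Iio_kappaOf hinit hfine hnormal hlim hQ)))))).exists
  exact ⟨_, mk_Iio_lt_of_lt_kappaPt hx.kappaOf_lt,
    isMeasurableCard_mk_Iio_kappaOf hℵ hC hult hsing, hQx⟩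

end

/-- If `κ` is the least measurable cardinal such that the set of strongly
compact cardinals below `κ` is unbounded in `κ`, then `κ` is not `2^κ` supercompact. -/
theorem least_measurable_limit_of_stronglyCompact_not_two_pow_supercompact
    (κ : Cardinal.{0})
    (hmeas : IsMeasurableCard κ)
    (hunb : ∀ β : Cardinal.{0}, β < κ →
      ∃ γ : Cardinal.{0}, β ≤ γ ∧ γ < κ ∧ IsStronglyCompactCard γ)
    (hleast : ∀ κ' : Cardinal.{0}, κ' < κ →
      ¬ (IsMeasurableCard κ' ∧ ∀ β : Cardinal.{0}, β < κ' →
          ∃ γ : Cardinal.{0}, β ≤ γ ∧ γ < κ' ∧ IsStronglyCompactCard γ)) :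
    ¬ IsLamSupercompact κ (2 ^ κ) := by
  intro hsc
  obtain ⟨κ', hκ', hmeas', hunb'⟩ :=
    hsc.exists_lt_isMeasurableCard_isCofinalBelow hmeas (Q := IsStronglyCompactCard) hunb
  exact hleast κ' hκ' ⟨hmeas', hunb'⟩
end

section
/- Let κ be a measurable cardinal, μ a κ-complete nonprincipal ultrafilter on κ, λ ≥ κ a cardinal, ⟨κ_α : α < κ⟩ an increasing sequence of cardinals below κ, and for each α < κ let μ_α be a κ_α-complete fine ultrafilter on P_{κ_α}(λ). Then the family U_λ of all X ⊆ P_κ(λ) such that {α < κ : X ∩ P_{κ_α}(λ) ∈ μ_α} ∈ μ is a κ-complete fine ultrafilter on P_κ(λ). -/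
open Cardinal

/-!
`U_λ` is the `μ`-limit of the ultrafilters `μ_α`, each restricted to `P_{κ_α}(λ) ⊆ P_κ(λ)`, so
the ultrafilter properties and fineness pass from the `μ_α` to `U_λ` pointwise in `α`. For
`κ`-completeness take fewer than `κ` members of `U_λ`: by `κ`-completeness of `μ`, for
`μ`-almost all `α` they all restrict into `μ_α`. Since `μ` is `κ`-complete and nonprincipal it
contains no set of size `< κ`, so for `μ`-almost all `α` the family also has fewer than `κ_α`
members (only `≤ ν + 1` indices have `κ_α ≤ ν`), and `κ_α`-completeness of `μ_α` applies.
-/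

open Set

section Ultrafilter

variable {α : Type} {A X Y : Set α} {F : Set (Set α)}

theorem IsUltrafilterOn.mem_of_superset_s3 (hF : IsUltrafilterOn A F) (hX : X ∈ F) (hYA : Y ⊆ A)
    (hXY : X ⊆ Y) : Y ∈ F :=
  hF.2.2.2.1 X hX Y hYA hXY

theorem IsUltrafilterOn.inter_mem_s3 (hF : IsUltrafilterOn A F) (hX : X ∈ F) (hY : Y ∈ F) :
    X ∩ Y ∈ F :=
  hF.2.2.2.2.1 X hX Y hY

theorem IsUltrafilterOn.diff_mem_of_notMem_s3 (hF : IsUltrafilterOn A F) (hXA : X ⊆ A)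
    (hX : X ∉ F) : A \ X ∈ F :=
  (hF.2.2.2.2.2 X hXA).resolve_left hX

/-- The complements of the singletons of `X` are fewer than `κ` members of `F` and intersect to
`Xᶜ`. -/
theorem IsUltrafilterOn.notMem_of_mk_lt {κ : Cardinal} (hF : IsUltrafilterOn univ F)
    (hFc : IsKComplete κ F) (hFnp : ∀ a, ({a} : Set α) ∉ F) (hX : #X < κ) : X ∉ F := by
  intro hXF
  obtain rfl | hXne := X.eq_empty_or_nonempty
  · exact hF.2.2.1 hXF
  have hcompl : ⋂₀ ((fun a => ({a} : Set α)ᶜ) '' X) ∈ F := by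
    refine hFc _ (hXne.image _) (mk_image_le.trans_lt hX) ?_
    rintro _ ⟨a, -, rfl⟩
    simpa [compl_eq_univ_sdiff] using hF.diff_mem_of_notMem_s3 (subset_univ _) (hFnp a)
  have hempty : X ∩ ⋂₀ ((fun a => ({a} : Set α)ᶜ) '' X) = ∅ := by
    ext a
    simp
  exact hF.2.2.1 (hempty ▸ hF.inter_mem_s3 hXF hcompl)

end Ultrafilter

theorem mk_setOf_le_le_add_one {ι : Type*} {k : ι → Cardinal} (hk : Function.Injective k)
    (ν : Cardinal) : #{i | k i ≤ ν} ≤ ν + 1 := by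
  have hord : ∀ i : {i | k i ≤ ν}, (k i).ord ∈ Iio (ν.ord + 1) := fun i =>
    Order.lt_add_one_iff.2 (ord_le_ord.2 i.2)
  have hinj :
      Function.Injective fun i : {i | k i ≤ ν} => (⟨(k i).ord, hord i⟩ : Iio (ν.ord + 1)) :=
    fun i j hij => Subtype.ext (hk (ord_injective (congrArg Subtype.val hij)))
  have hle := lift_mk_le_lift_mk_of_injective hinj
  rwa [mk_Iio_ordinal, lift_lift, lift_le, Ordinal.card_add, card_ord, Ordinal.card_one] at hle

theorem IsUltrafilterOn.setOf_lt_apply_mem {ι : Type} {μ : Set (Set ι)} {κ ν : Cardinal.{0}}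
    {k : ι → Cardinal.{0}} (hμ : IsUltrafilterOn univ μ) (hμc : IsKComplete κ μ)
    (hμnp : ∀ i, ({i} : Set ι) ∉ μ) (hκ : ℵ₀ < κ) (hk : Function.Injective k) (hν : ν < κ) :
    {i | ν < k i} ∈ μ := by
  have hsmall : #{i | k i ≤ ν} < κ :=
    (mk_setOf_le_le_add_one hk ν).trans_lt (add_one_lt_of_lt hκ.le hν)
  have := hμ.diff_mem_of_notMem_s3 (subset_univ _) (hμ.notMem_of_mk_lt hμc hμnp hsmall)
  simpa [← compl_eq_univ_sdiff, compl_ofPred] using this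

section LimitFilter

variable {ι β : Type} {μ : Set (Set ι)} {A : Set β} {B : ι → Set β} {m : ι → Set (Set β)}

/-- With `B i = P_{κ_i}(λ)` this is the paper's `U_λ`: `{p ∈ X | #p < k i}` is `X ∩ B i`. -/
def limitFilter (μ : Set (Set ι)) (A : Set β) (B : ι → Set β) (m : ι → Set (Set β)) :
    Set (Set β) :=
  {X | X ⊆ A ∧ {i | X ∩ B i ∈ m i} ∈ μ}

theorem isUltrafilterOn_limitFilter (hμ : IsUltrafilterOn univ μ) (hB : ∀ i, B i ⊆ A)
    (hm : ∀ i, IsUltrafilterOn (B i) (m i)) : IsUltrafilterOn A (limitFilter μ A B m) := by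
  have hμup {I J : Set ι} (hI : I ∈ μ) (hIJ : I ⊆ J) : J ∈ μ :=
    hμ.mem_of_superset_s3 hI (subset_univ J) hIJ
  refine ⟨fun X hX => hX.1, ⟨subset_rfl, ?_⟩, ?_, ?_, ?_, ?_⟩
  · refine hμup hμ.2.1 fun i _ => ?_
    simpa only [mem_ofPred_eq, inter_eq_right.2 (hB i)] using (hm i).2.1
  · rintro ⟨-, hempty⟩
    refine hμ.2.2.1 (hμup hempty fun i hi => ?_)
    exact (hm i).2.2.1 (empty_inter (B i) ▸ hi)
  · rintro X ⟨-, hX⟩ Y hYA hXY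
    exact ⟨hYA, hμup hX fun i hi =>
      (hm i).mem_of_superset_s3 hi inter_subset_right (inter_subset_inter_left _ hXY)⟩
  · rintro X ⟨hXA, hX⟩ Y ⟨-, hY⟩
    refine ⟨inter_subset_left.trans hXA, hμup (hμ.inter_mem_s3 hX hY) ?_⟩
    rintro i ⟨hXi, hYi⟩
    rw [mem_ofPred_eq, inter_inter_distrib_right]
    exact (hm i).inter_mem_s3 hXi hYi
  · intro X hXA
    by_cases hX : {i | X ∩ B i ∈ m i} ∈ μ
    · exact Or.inl ⟨hXA, hX⟩
    refine Or.inr ⟨sdiff_subset, hμup (hμ.diff_mem_of_notMem_s3 (subset_univ _) hX) ?_⟩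
    rintro i ⟨-, hXi⟩
    have hdiff : B i \ (X ∩ B i) = (A \ X) ∩ B i := by
      ext p
      have := @hB i p
      simp only [mem_sdiff, mem_inter_iff]
      tauto
    simpa only [mem_ofPred_eq, ← hdiff] using (hm i).diff_mem_of_notMem_s3 inter_subset_right hXi

theorem isKComplete_limitFilter {κ : Cardinal} {k : ι → Cardinal}
    (hμ : IsUltrafilterOn univ μ) (hμc : IsKComplete κ μ) (htail : ∀ ν < κ, {i | ν < k i} ∈ μ)
    (hm : ∀ i, IsKComplete (k i) (m i)) : IsKComplete κ (limitFilter μ A B m) := by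
  intro S hSne hS hSU
  obtain ⟨X₀, hX₀⟩ := hSne
  refine ⟨(sInter_subset_of_mem hX₀).trans (hSU X₀ hX₀).1, ?_⟩
  have hall : ⋂₀ ((fun X => {i | X ∩ B i ∈ m i}) '' S) ∈ μ :=
    hμc _ (nonempty_of_mem (mem_image_of_mem _ hX₀)) (mk_image_le.trans_lt hS)
      (by rintro _ ⟨X, hX, rfl⟩; exact (hSU X hX).2)
  refine hμ.mem_of_superset_s3 (hμ.inter_mem_s3 hall (htail _ hS)) (subset_univ _) ?_
  rintro i ⟨hi, hSi⟩
  have hinter : ⋂₀ ((· ∩ B i) '' S) = ⋂₀ S ∩ B i := by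
    rw [sInter_image, sInter_eq_biInter, biInter_inter ⟨X₀, hX₀⟩]
  rw [mem_ofPred_eq, ← hinter]
  exact hm i _ (nonempty_of_mem (mem_image_of_mem _ hX₀)) (mk_image_le.trans_lt hSi)
    (by rintro _ ⟨X, hX, rfl⟩; exact hi _ ⟨X, hX, rfl⟩)

end LimitFilter

theorem Pkl_subset_Pkl {κ₁ κ₂ : Cardinal.{0}} (h : κ₁ ≤ κ₂) (lam : Cardinal.{0}) :
    Pkl κ₁ lam ⊆ Pkl κ₂ lam :=
  fun _ hx => lt_of_lt_of_le hx h

theorem isFine_limitFilter {ι : Type} {μ : Set (Set ι)} {κ lam : Cardinal.{0}}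
    {k : ι → Cardinal.{0}} {m : ι → Set (Set (Set lam.ord.ToType))} (hμ : Set.univ ∈ μ)
    (hk : ∀ i, k i ≤ κ) (hm : ∀ i, IsFine (k i) lam (m i)) :
    IsFine κ lam (limitFilter μ (Pkl κ lam) (fun i => Pkl (k i) lam) m) := by
  refine fun a => ⟨fun x hx => hx.1, ?_⟩
  convert hμ using 1
  refine eq_univ_of_forall fun i => ?_
  have hrestrict :
      {x | x ∈ Pkl κ lam ∧ a ∈ x} ∩ Pkl (k i) lam = {x | x ∈ Pkl (k i) lam ∧ a ∈ x} := by
    ext x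
    have := @Pkl_subset_Pkl _ _ (hk i) lam x
    simp only [mem_inter_iff, mem_ofPred_eq]
    tauto
  simpa only [mem_ofPred_eq, hrestrict] using hm i a

theorem menas_ultrafilter_general (κ lam : Cardinal.{0})
    (hκ : IsMeasurableCard κ)
    (μ : Set (Set κ.ord.ToType))
    (hμ : IsUltrafilterOn Set.univ μ) (hμc : IsKComplete κ μ)
    (hμnp : ∀ a : κ.ord.ToType, ({a} : Set κ.ord.ToType) ∉ μ)
    (k : κ.ord.ToType → Cardinal.{0})
    (hkinc : ∀ a b : κ.ord.ToType, a < b → k a < k b)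
    (hklt : ∀ a : κ.ord.ToType, k a < κ)
    (m : κ.ord.ToType → Set (Set (Set lam.ord.ToType)))
    (hm : ∀ a : κ.ord.ToType,
      IsUltrafilterOn (Pkl (k a) lam) (m a) ∧ IsKComplete (k a) (m a) ∧
        IsFine (k a) lam (m a)) :
    IsUltrafilterOn (Pkl κ lam)
        {X | X ⊆ Pkl κ lam ∧ {a : κ.ord.ToType | {p ∈ X | #p < k a} ∈ m a} ∈ μ} ∧
      IsKComplete κ
        {X | X ⊆ Pkl κ lam ∧ {a : κ.ord.ToType | {p ∈ X | #p < k a} ∈ m a} ∈ μ} ∧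
      IsFine κ lam
        {X | X ⊆ Pkl κ lam ∧ {a : κ.ord.ToType | {p ∈ X | #p < k a} ∈ m a} ∈ μ} := by
  have hk : Function.Injective k := StrictMono.injective fun a b => hkinc a b
  exact ⟨isUltrafilterOn_limitFilter hμ (fun a => Pkl_subset_Pkl (hklt a).le lam)
      fun a => (hm a).1,
    isKComplete_limitFilter hμ hμc (fun ν hν => hμ.setOf_lt_apply_mem hμc hμnp hκ.1 hk hν)
      fun a => (hm a).2.1,
    isFine_limitFilter hμ.2.1 (fun a => (hklt a).le) fun a => (hm a).2.2⟩

/-- **Menas.** Let `κ` be measurable, `μ` a `κ`-complete nonprincipal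
ultrafilter on `κ`, `λ ≥ κ`, `⟨κ_α : α < κ⟩` an increasing sequence of cardinals below
`κ`, and for each `α < κ` let `μ_α` be a `κ_α`-complete fine ultrafilter on `P_{κ_α}(λ)`.
Then `U_λ = {X ⊆ P_κ(λ) : {α < κ : X ∩ P_{κ_α}(λ) ∈ μ_α} ∈ μ}` is a `κ`-complete fine
ultrafilter on `P_κ(λ)`. -/
theorem menas_ultrafilter (κ lam : Cardinal.{0})
    (hκ : IsMeasurableCard κ) (hkle : κ ≤ lam)
    (μ : Set (Set κ.ord.ToType))
    (hμ : IsUltrafilterOn Set.univ μ) (hμc : IsKComplete κ μ)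
    (hμnp : ∀ a : κ.ord.ToType, ({a} : Set κ.ord.ToType) ∉ μ)
    (k : κ.ord.ToType → Cardinal.{0})
    (hkinc : ∀ a b : κ.ord.ToType, a < b → k a < k b)
    (hklt : ∀ a : κ.ord.ToType, k a < κ)
    (m : κ.ord.ToType → Set (Set (Set lam.ord.ToType)))
    (hm : ∀ a : κ.ord.ToType,
      IsUltrafilterOn (Pkl (k a) lam) (m a) ∧ IsKComplete (k a) (m a) ∧
        IsFine (k a) lam (m a)) :
    IsUltrafilterOn (Pkl κ lam)
        {X | X ⊆ Pkl κ lam ∧ {a : κ.ord.ToType | {p ∈ X | #p < k a} ∈ m a} ∈ μ} ∧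
      IsKComplete κ
        {X | X ⊆ Pkl κ lam ∧ {a : κ.ord.ToType | {p ∈ X | #p < k a} ∈ m a} ∈ μ} ∧
      IsFine κ lam
        {X | X ⊆ Pkl κ lam ∧ {a : κ.ord.ToType | {p ∈ X | #p < k a} ∈ m a} ∈ μ} :=
  menas_ultrafilter_general κ lam hκ μ hμ hμc hμnp k hkinc hklt m hm
end

section
/- Let δ < λ be regular cardinals with δ inaccessible and λ > δ⁺, let S ⊆ λ be a set of ordinals each of cofinality δ and greater than δ, and let X = ⟨x_β : β ∈ S⟩ be a sequence such that each x_β ⊆ β is cofinal in β and has order type δ. Then for every infinite cardinal γ < δ, the ordering ⟨P¹_{δ,λ}[S], ≤^γ⟩ is γ⁺-directed closed: every subset of P¹_{δ,λ}[S] of cardinality at most γ which is directed with respect to ≤^γ has an upper bound with respect to ≤^γ. -/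
open Cardinal

/-- The order type of a set of ordinals. -/
noncomputable def otype (s : Set Ordinal.{0}) : Ordinal.{1} :=
  Ordinal.type (Subrel ((· < ·) : Ordinal.{0} → Ordinal.{0} → Prop) (· ∈ s))

/-- A condition in `P¹_{δ,λ}[S]` (relative to the fixed `♣(S)`-sequence
`⟨x_β : β ∈ S⟩`): a `5`-tuple `⟨w, α, r̄, Z, Γ⟩` as described in the paper.  The functions
`Z` and `Γ`, whose domains are subsets of `{x_β : β ∈ S}`, are represented by the set `B`
of indices `β` together with total functions `Z` and `G` on ordinals (whose values are
only relevant on `B`); similarly `r̄ = ⟨r_i : i ∈ w⟩` is represented by a total function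
`r`, relevant only for `i ∈ w` and arguments `< bound`. -/
structure P1Cond (δ lam : Cardinal.{0}) (S : Set Ordinal.{0})
    (x : Ordinal.{0} → Set Ordinal.{0}) where
  /-- the support `w` -/
  w : Set Ordinal.{0}
  /-- the common domain `α` of the functions `r_i` -/
  bound : Ordinal.{0}
  /-- `r i ξ` is the value `r_i(ξ)` for `i ∈ w`, `ξ < bound` -/
  r : Ordinal.{0} → Ordinal.{0} → Bool
  /-- the set of `β ∈ S` with `x_β ∈ dom(Z) = dom(Γ)` -/
  B : Set Ordinal.{0}
  /-- `Z β` is the value `Z(x_β)` for `β ∈ B` -/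
  Z : Ordinal.{0} → Bool
  /-- `G β` is the value `Γ(x_β)` for `β ∈ B` -/
  G : Ordinal.{0} → Set Ordinal.{0}
  w_sub : w ⊆ Set.Iio lam.ord
  w_card : #w = Cardinal.lift.{1} δ
  bound_lt : bound < δ.ord
  B_sub : B ⊆ S
  Z_cond : ∀ β ∈ B, ∃ y : Set Ordinal.{0}, y ⊆ x β ∩ w ∧ #y = Cardinal.lift.{1} δ ∧
    ∃ b < β, x β \ y ⊆ Set.Iio b
  G_bdd : ∀ β ∈ B, G β ⊆ Set.Iio bound
  G_closed : ∀ β ∈ B, ∀ s : Set Ordinal.{0}, s ⊆ G β → s.Nonempty → sSup s ∈ G β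
  G_cond : ∀ β ∈ B, ∀ ξ ∈ G β, (∃ c : Cardinal.{0}, ξ = c.ord ∧ c.IsInaccessible) →
    ∀ b ∈ x β, otype {c | c ∈ x β ∧ c < b} = Ordinal.lift.{1} ξ →
      b ∈ w ∧ ∃ b', b' < b ∧ b' ∈ w ∧ b' ∈ x β ∧ r b' ξ = Z β

/-- The ordering on `P¹_{δ,λ}[S]`. -/
def P1Cond.le {δ lam : Cardinal.{0}} {S : Set Ordinal.{0}}
    {x : Ordinal.{0} → Set Ordinal.{0}} (p q : P1Cond δ lam S x) : Prop :=
  p.w ⊆ q.w ∧ p.bound ≤ q.bound ∧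
    (∀ i ∈ p.w, ∀ ξ < p.bound, p.r i ξ = q.r i ξ) ∧
    #{i : Ordinal.{0} | i ∈ p.w ∧ ∃ ξ, p.bound ≤ ξ ∧ ξ < q.bound ∧ q.r i ξ ≠ false} <
      Cardinal.lift.{1} δ ∧
    p.B ⊆ q.B ∧ (∀ β ∈ p.B, p.Z β = q.Z β) ∧
    (∀ β ∈ p.B, p.G β ⊆ q.G β ∧ ∀ ξ ∈ q.G β, ξ ∉ p.G β → ∀ η ∈ p.G β, η < ξ) ∧
    #{β : Ordinal.{0} | β ∈ p.B ∧ p.G β ≠ q.G β} < Cardinal.lift.{1} δ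

/-- The auxiliary ordering `≤^γ` on `P¹_{δ,λ}[S]`: `p ≤^γ q` iff `p = q`, or `p < q` and
every `Γ`-value changed from `p` to `q` acquires a maximum above `γ`. -/
def P1Cond.leGamma {δ lam : Cardinal.{0}} {S : Set Ordinal.{0}}
    {x : Ordinal.{0} → Set Ordinal.{0}} (γ : Cardinal.{0})
    (p q : P1Cond δ lam S x) : Prop :=
  p = q ∨ (p.le q ∧ p ≠ q ∧ ∀ β ∈ p.B, p.G β ≠ q.G β → γ.ord < sSup (q.G β))

/-!
Enumerate the directed set as `q i`, `i < γ`, and glue: take the unions of the supports `w` and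
of the domains of `Z` and `Γ`, a bound `α` above all the old ones, and the common extensions of
the `r̄`s and `Z`s (directedness makes them compatible). For each `x_β` the values `Γ(x_β)` form
a directed system of end-extensions, so their union `U` is an end-extension of each of them that
is closed below `sup U`; the new `Γ(x_β)` is `U` with `sup U` adjoined. If `sup U ∉ U`, the
`≤^γ` clause puts `sup U` above `γ`, while it is a supremum of at most `γ` smaller ordinals, so
it is not an inaccessible cardinal and requirement (5) says nothing about it. Every `q i` is
changed at fewer than `δ` places, since these changes are covered by the changes from `q i` to
`γ` many common upper bounds inside the directed set.
-/

open Set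

universe u v

theorem Cardinal.mk_iUnion_lt_of_isRegular {α : Type u} {ι : Type v} {s : ι → Set α}
    {κ : Cardinal.{u}} (hκ : κ.IsRegular) (hι : lift.{u} #ι < lift.{v} κ)
    (hs : ∀ i, #(s i) < κ) : #(⋃ i, s i) < κ := by
  rw [← lift_lt.{u, v}]
  refine (mk_iUnion_le_lift s).trans_lt (mul_lt_of_lt (aleph0_le_lift.2 hκ.aleph0_le) hι ?_)
  apply lift_iSup_lt_of_lt_cof_ord _ fun i => lift_lt.2 (hs i)
  rwa [lift_lift, ← lift_ord, ← Ordinal.lift_cof, hκ.cof_ord, lift_umax]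

theorem Cardinal.mk_iUnion_eq_of_forall_mk_eq {α : Type u} {ι : Type v} [Nonempty ι]
    {s : ι → Set α} {κ : Cardinal.{u}} (hκ : ℵ₀ ≤ κ) (hι : lift.{u} #ι ≤ lift.{v} κ)
    (hs : ∀ i, #(s i) = κ) : #(⋃ i, s i) = κ := by
  obtain ⟨i⟩ := ‹Nonempty ι›
  refine le_antisymm ?_ ((hs i).symm.trans_le (mk_le_mk_of_subset (subset_iUnion s i)))
  rw [← lift_le.{v, u}]
  refine (mk_iUnion_le_lift s).trans ?_
  simp only [hs, ciSup_const]
  exact mul_le_of_le (aleph0_le_lift.2 hκ) hι le_rfl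

theorem Cardinal.exists_range_eq_of_mk_le {α : Type u} {s : Set α} (hs : s.Nonempty)
    {κ : Cardinal.{v}} (h : lift.{v} #s ≤ lift.{u} κ) : ∃ f : κ.out → α, range f = s := by
  obtain ⟨e⟩ : Nonempty (s ↪ κ.out) := by rwa [← lift_mk_le', mk_out]
  have : Nonempty s := hs.to_subtype
  refine ⟨Subtype.val ∘ Function.invFun e, ?_⟩
  rw [range_comp, (Function.invFun_surjective e.injective).range_eq, image_univ,
    Subtype.range_coe]

theorem decide_exists_eq_of_agree {ι : Sort*} {P : ι → Prop} {b : ι → Bool}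
    [Decidable (∃ l, P l ∧ b l = true)] (hb : ∀ k l, P k → P l → b k = b l) {k : ι}
    (hk : P k) : decide (∃ l, P l ∧ b l = true) = b k := by
  cases hbk : b k
  · rw [decide_eq_false_iff_not]
    rintro ⟨l, hl, hbl⟩
    rw [hb k l hk hl, hbl] at hbk
    exact Bool.noConfusion hbk
  · exact decide_eq_true ⟨k, hk, hbk⟩

def IsEndExtension {α : Type*} [LT α] (A C : Set α) : Prop :=
  A ⊆ C ∧ ∀ ξ ∈ C, ξ ∉ A → ∀ η ∈ A, η < ξ

namespace IsEndExtension

variable {α : Type*} [Preorder α] {A B C : Set α}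

protected theorem refl (A : Set α) : IsEndExtension A A :=
  ⟨subset_rfl, fun _ hξ hξA => (hξA hξ).elim⟩

protected theorem trans (hAB : IsEndExtension A B) (hBC : IsEndExtension B C) :
    IsEndExtension A C := by
  refine ⟨hAB.1.trans hBC.1, fun ξ hξ hξA η hη => ?_⟩
  by_cases hξB : ξ ∈ B
  · exact hAB.2 ξ hξB hξA η hη
  · exact hBC.2 ξ hξ hξB η (hAB.1 hη)

theorem mem_of_le (hAC : IsEndExtension A C) {a η : α} (ha : a ∈ C) (hη : η ∈ A)
    (haη : a ≤ η) : a ∈ A :=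
  by_contra fun h => (hAC.2 a ha h η hη).not_ge haη

end IsEndExtension

theorem isEndExtension_iUnion {α ι : Type*} [Preorder α] {A : ι → Set α}
    (hA : Directed IsEndExtension A) (k : ι) : IsEndExtension (A k) (⋃ l, A l) := by
  refine ⟨subset_iUnion A k, fun ξ hξ hξk η hη => ?_⟩
  obtain ⟨l, hξl⟩ := mem_iUnion.1 hξ
  obtain ⟨m, hkm, hlm⟩ := hA k l
  exact hkm.2 ξ (hlm.1 hξl) hξk η hη

section WithSup

variable {α : Type*} [ConditionallyCompleteLinearOrder α]

def SSupClosed (A : Set α) : Prop :=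
  ∀ s ⊆ A, s.Nonempty → sSup s ∈ A

open Classical in
noncomputable def withSup (U : Set α) : Set α :=
  if U.Nonempty then insert (sSup U) U else ∅

variable {U : Set α}

theorem mem_withSup {ξ : α} : ξ ∈ withSup U ↔ ξ ∈ U ∨ U.Nonempty ∧ ξ = sSup U := by
  unfold withSup
  split_ifs with hU
  · rw [mem_insert_iff]
    tauto
  · simp [not_nonempty_iff_eq_empty.1 hU]

theorem subset_withSup (U : Set α) : U ⊆ withSup U :=
  fun _ hξ => mem_withSup.2 (Or.inl hξ)

theorem nonempty_of_mem_withSup {ξ : α} (hξ : ξ ∈ withSup U) : U.Nonempty := by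
  rcases mem_withSup.1 hξ with h | h
  exacts [⟨ξ, h⟩, h.1]

theorem withSup_subset_Iic {b : α} (hU : U ⊆ Iic b) : withSup U ⊆ Iic b := by
  intro ξ hξ
  rcases mem_withSup.1 hξ with h | ⟨hne, rfl⟩
  exacts [hU h, csSup_le hne hU]

theorem sSup_withSup (hU : BddAbove U) : sSup (withSup U) = sSup U := by
  rcases U.eq_empty_or_nonempty with rfl | hne
  · simp [withSup]
  · rw [withSup, if_pos hne, csSup_insert hU hne, sup_idem]

theorem withSup_eq_self (hU : SSupClosed U) : withSup U = U := by
  rcases U.eq_empty_or_nonempty with rfl | hne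
  · simp [withSup]
  · rw [withSup, if_pos hne, insert_eq_of_mem (hU U subset_rfl hne)]

theorem isEndExtension_withSup (hU : BddAbove U) : IsEndExtension U (withSup U) := by
  refine ⟨subset_withSup U, fun ξ hξ hξU η hη => ?_⟩
  obtain ⟨-, rfl⟩ := (mem_withSup.1 hξ).resolve_left hξU
  exact (le_csSup hU hη).lt_of_ne fun h => hξU (h ▸ hη)

end WithSup

section DirectedFamily

variable {α ι : Type*} [ConditionallyCompleteLinearOrder α] {θ : α} {A : ι → Set α}

-- With `θ = γ.ord`, this is what `≤^γ` says about a single `Γ`-value.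
def IsEndExtensionAbove (θ : α) (A C : Set α) : Prop :=
  IsEndExtension A C ∧ (A ≠ C → θ < sSup C)

theorem exists_mem_iUnion_notMem {k : ι} (hk : SSupClosed (A k))
    (hne : A k ≠ withSup (⋃ l, A l)) : ∃ a ∈ ⋃ l, A l, a ∉ A k := by
  by_contra! h
  have hU : ⋃ l, A l = A k := Subset.antisymm h (subset_iUnion A k)
  exact hne (by rw [hU, withSup_eq_self hk])

theorem lt_sSup_iUnion (hA : Directed (IsEndExtensionAbove θ) A) (hbdd : BddAbove (⋃ l, A l))
    {k l : ι} {a : α} (ha : a ∈ A l) (hak : a ∉ A k) : θ < sSup (⋃ l, A l) := by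
  obtain ⟨m, hkm, hlm⟩ := hA k l
  have ham : a ∈ A m := hlm.1.1 ha
  calc θ < sSup (A m) := hkm.2 fun h => hak (h ▸ ham)
    _ ≤ sSup (⋃ l, A l) := csSup_le_csSup hbdd ⟨a, ham⟩ (subset_iUnion A m)

theorem isEndExtensionAbove_withSup (hA : Directed (IsEndExtensionAbove θ) A)
    (hcl : ∀ k, SSupClosed (A k)) (hbdd : BddAbove (⋃ l, A l)) (k : ι) :
    IsEndExtensionAbove θ (A k) (withSup (⋃ l, A l)) := by
  refine ⟨(isEndExtension_iUnion (hA.mono fun _ _ h => h.1) k).trans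
    (isEndExtension_withSup hbdd), fun hne => ?_⟩
  obtain ⟨a, ha, hak⟩ := exists_mem_iUnion_notMem (hcl k) hne
  obtain ⟨l, hal⟩ := mem_iUnion.1 ha
  rw [sSup_withSup hbdd]
  exact lt_sSup_iUnion hA hbdd hal hak

theorem lt_sSup_iUnion_of_sSup_notMem (hA : Directed (IsEndExtensionAbove θ) A)
    (hcl : ∀ k, SSupClosed (A k)) (hbdd : BddAbove (⋃ l, A l)) (hne : (⋃ l, A l).Nonempty)
    (hnot : sSup (⋃ l, A l) ∉ ⋃ l, A l) : θ < sSup (⋃ l, A l) := by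
  obtain ⟨a, ha⟩ := hne
  obtain ⟨k, -⟩ := mem_iUnion.1 ha
  have hsup : sSup (⋃ l, A l) ∈ withSup (⋃ l, A l) := mem_withSup.2 (Or.inr ⟨⟨a, ha⟩, rfl⟩)
  rw [← sSup_withSup hbdd]
  exact (isEndExtensionAbove_withSup hA hcl hbdd k).2
    fun h => hnot (subset_iUnion A k (h ▸ hsup))

theorem sSupClosed_withSup_iUnion (hA : Directed IsEndExtension A)
    (hcl : ∀ k, SSupClosed (A k)) (hbdd : BddAbove (⋃ l, A l)) :
    SSupClosed (withSup (⋃ l, A l)) := by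
  intro s hs hsne
  set U := ⋃ l, A l
  have hUne : U.Nonempty := nonempty_of_mem_withSup (hs hsne.some_mem)
  have hsU : s ⊆ Iic (sSup U) := hs.trans (withSup_subset_Iic fun _ ha => le_csSup hbdd ha)
  rcases (csSup_le hsne hsU).eq_or_lt with heq | hlt
  · exact mem_withSup.2 (Or.inr ⟨hUne, heq⟩)
  obtain ⟨η, hηU, hsη⟩ := exists_lt_of_lt_csSup hUne hlt
  obtain ⟨k, hηk⟩ := mem_iUnion.1 hηU
  have hsk : s ⊆ A k := fun a ha => by
    have haη : a ≤ η := (le_csSup ⟨sSup U, hsU⟩ ha).trans hsη.le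
    have haU : a ∈ U := by
      rcases mem_withSup.1 (hs ha) with h | ⟨-, rfl⟩
      exacts [h, ((le_csSup ⟨_, hsU⟩ ha).trans_lt hlt).false.elim]
    exact (isEndExtension_iUnion hA k).mem_of_le haU hηk haη
  exact subset_withSup U (subset_iUnion A k (hcl k s hsk hsne))

end DirectedFamily

theorem Ordinal.cof_sSup_iUnion_le {ι : Type u} {A : ι → Set Ordinal.{u}}
    (hcl : ∀ k, SSupClosed (A k)) (hbdd : BddAbove (⋃ k, A k)) (hne : (⋃ k, A k).Nonempty)
    (hnot : sSup (⋃ k, A k) ∉ ⋃ k, A k) : (sSup (⋃ k, A k)).cof ≤ #ι := by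
  set U := ⋃ k, A k
  have hlt_of_mem : ∀ a ∈ U, a < sSup U := fun a ha =>
    (le_csSup hbdd ha).lt_of_ne fun h => hnot (h ▸ ha)
  have hlt : ∀ k, sSup (A k) < sSup U := by
    intro k
    rcases (A k).eq_empty_or_nonempty with hk | hk
    · obtain ⟨a, ha⟩ := hne
      rw [hk, csSup_empty]
      exact bot_le.trans_lt (hlt_of_mem a ha)
    · exact hlt_of_mem _ (subset_iUnion A k (hcl k _ subset_rfl hk))
  by_contra! hcof
  refine (Ordinal.iSup_lt_of_lt_cof hcof hlt).not_ge (csSup_le' fun a ha => ?_)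
  obtain ⟨k, hak⟩ := mem_iUnion.1 ha
  exact (le_csSup (hbdd.mono (subset_iUnion A k)) hak).trans
    (le_ciSup Ordinal.bddAbove_of_small k)

namespace P1Cond

section Basic

variable {δ lam : Cardinal.{0}} {S : Set Ordinal.{0}} {x : Ordinal.{0} → Set Ordinal.{0}}
  {γ : Cardinal.{0}} {p q : P1Cond δ lam S x} {β : Ordinal.{0}}

theorem le.bound_le (h : p.le q) : p.bound ≤ q.bound := h.2.1

theorem le.r_eq (h : p.le q) : ∀ i ∈ p.w, ∀ ξ < p.bound, p.r i ξ = q.r i ξ := h.2.2.1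

theorem le.card_r_changed_lt (h : p.le q) :
    #{i : Ordinal.{0} | i ∈ p.w ∧ ∃ ξ, p.bound ≤ ξ ∧ ξ < q.bound ∧ q.r i ξ ≠ false} <
      lift.{1} δ :=
  h.2.2.2.1

theorem le.B_subset (h : p.le q) : p.B ⊆ q.B := h.2.2.2.2.1

theorem le.Z_eq (h : p.le q) : ∀ β ∈ p.B, p.Z β = q.Z β := h.2.2.2.2.2.1

theorem le.isEndExtension (h : p.le q) (hβ : β ∈ p.B) : IsEndExtension (p.G β) (q.G β) :=
  h.2.2.2.2.2.2.1 β hβ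

theorem le.card_G_changed_lt (h : p.le q) :
    #{β : Ordinal.{0} | β ∈ p.B ∧ p.G β ≠ q.G β} < lift.{1} δ :=
  h.2.2.2.2.2.2.2

theorem le_refl (p : P1Cond δ lam S x) : p.le p := by
  have hδ : 0 < lift.{1} δ := by simpa using ord_pos.1 (pos_of_gt p.bound_lt)
  refine ⟨subset_rfl, le_rfl, fun _ _ _ _ => rfl, ?_, subset_rfl, fun _ _ => rfl,
    fun _ _ => IsEndExtension.refl _, ?_⟩
  · convert hδ
    simp only [mk_eq_zero_iff, isEmpty_subtype, mem_ofPred_eq, not_and, not_exists]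
    exact fun i _ ξ h₁ h₂ => (h₁.not_gt h₂).elim
  · convert hδ
    simp

theorem leGamma.le (h : leGamma γ p q) : p.le q := by
  rcases h with rfl | ⟨h, -, -⟩
  exacts [p.le_refl, h]

theorem leGamma.isEndExtensionAbove (h : leGamma γ p q) (hβ : β ∈ p.B) :
    IsEndExtensionAbove γ.ord (p.G β) (q.G β) := by
  rcases h with rfl | ⟨h, -, hγ⟩
  exacts [⟨.refl _, fun hne => (hne rfl).elim⟩, ⟨h.isEndExtension hβ, hγ β hβ⟩]

theorem leGamma_of_le (h : p.le q) (hγ : ∀ β ∈ p.B, p.G β ≠ q.G β → γ.ord < sSup (q.G β)) :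
    leGamma γ p q := by
  by_cases hpq : p = q
  exacts [.inl hpq, .inr ⟨h, hpq, hγ⟩]

theorem nonempty (hδ : δ ≠ 0) (hδlam : δ ≤ lam) : Nonempty (P1Cond δ lam S x) :=
  ⟨{ w := Iio δ.ord
     bound := 0
     r := fun _ _ => false
     B := ∅
     Z := fun _ => false
     G := fun _ => ∅
     w_sub := Iio_subset_Iio (ord_le_ord.2 hδlam)
     w_card := by rw [mk_Iio_ordinal, card_ord]
     bound_lt := ord_pos.2 (pos_iff_ne_zero.2 hδ)
     B_sub := empty_subset S
     Z_cond := fun _ h => h.elim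
     G_bdd := fun _ h => h.elim
     G_closed := fun _ h => h.elim
     G_cond := fun _ h => h.elim }⟩

end Basic

section Glue

variable {δ lam : Cardinal.{0}} {S : Set Ordinal.{0}} {x : Ordinal.{0} → Set Ordinal.{0}}
  {γ : Cardinal.{0}} {ι : Type} (q : ι → P1Cond δ lam S x)

open Classical in
noncomputable def gluedR (j ξ : Ordinal.{0}) : Bool :=
  decide (∃ k, (j ∈ (q k).w ∧ ξ < (q k).bound) ∧ (q k).r j ξ = true)

open Classical in
noncomputable def gluedZ (β : Ordinal.{0}) : Bool :=
  decide (∃ k, β ∈ (q k).B ∧ (q k).Z β = true)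

def unionG (β : Ordinal.{0}) : Set Ordinal.{0} :=
  ⋃ k : {k // β ∈ (q k).B}, (q k).G β

variable {q}

open Classical in
theorem gluedR_eq (hq : Directed P1Cond.le q) {k : ι} {j ξ : Ordinal.{0}} (hj : j ∈ (q k).w)
    (hξ : ξ < (q k).bound) : gluedR q j ξ = (q k).r j ξ := by
  refine decide_exists_eq_of_agree (fun k l hk hl => ?_) ⟨hj, hξ⟩
  obtain ⟨m, hkm, hlm⟩ := hq k l
  rw [hkm.r_eq j hk.1 ξ hk.2, hlm.r_eq j hl.1 ξ hl.2]

open Classical in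
theorem gluedZ_eq (hq : Directed P1Cond.le q) {k : ι} {β : Ordinal.{0}} (hβ : β ∈ (q k).B) :
    gluedZ q β = (q k).Z β := by
  refine decide_exists_eq_of_agree (fun k l hk hl => ?_) hβ
  obtain ⟨m, hkm, hlm⟩ := hq k l
  rw [hkm.Z_eq β hk, hlm.Z_eq β hl]

theorem exists_of_gluedR_ne_false {j ξ : Ordinal.{0}} (h : gluedR q j ξ ≠ false) :
    ∃ k, j ∈ (q k).w ∧ ξ < (q k).bound ∧ (q k).r j ξ = true := by
  simpa [gluedR] using h

theorem iSup_bound_lt (hδ : δ.IsRegular) (hιδ : #ι < δ) : ⨆ k, (q k).bound < δ.ord :=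
  Ordinal.iSup_lt_of_lt_cof (by rwa [hδ.cof_ord]) fun k => (q k).bound_lt

theorem unionG_subset_Iic (β : Ordinal.{0}) : unionG q β ⊆ Iic (⨆ k, (q k).bound) := by
  intro a ha
  obtain ⟨⟨k, hk⟩, hak⟩ := mem_iUnion.1 ha
  exact (mem_Iio.1 ((q k).G_bdd β hk hak)).le.trans (le_ciSup Ordinal.bddAbove_of_small k)

theorem bddAbove_unionG (β : Ordinal.{0}) : BddAbove (unionG q β) :=
  bddAbove_Iic.mono (unionG_subset_Iic β)

theorem directed_G (hq : Directed (leGamma γ) q) (β : Ordinal.{0}) :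
    Directed (IsEndExtensionAbove γ.ord) fun k : {k // β ∈ (q k).B} => (q k).G β := by
  rintro ⟨k, hk⟩ ⟨l, hl⟩
  obtain ⟨m, hkm, hlm⟩ := hq k l
  exact ⟨⟨m, hkm.le.B_subset hk⟩, hkm.isEndExtensionAbove hk, hlm.isEndExtensionAbove hl⟩

theorem isEndExtensionAbove_withSup_unionG (hq : Directed (leGamma γ) q) {i : ι}
    {β : Ordinal.{0}} (hβ : β ∈ (q i).B) :
    IsEndExtensionAbove γ.ord ((q i).G β) (withSup (unionG q β)) :=
  isEndExtensionAbove_withSup (directed_G hq β) (fun k => (q k).G_closed β k.2)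
    (bddAbove_unionG β) ⟨i, hβ⟩

theorem mem_unionG_of_eq_ord (hq : Directed (leGamma γ) q) (hιγ : #ι ≤ γ) {β ξ : Ordinal.{0}}
    {c : Cardinal.{0}} (hc : c.IsRegular) (hξc : ξ = c.ord) (hξ : ξ ∈ withSup (unionG q β)) :
    ξ ∈ unionG q β := by
  by_contra hξU
  obtain ⟨hne, rfl⟩ := (mem_withSup.1 hξ).resolve_left hξU
  have hcl : ∀ k : {k // β ∈ (q k).B}, SSupClosed ((q k).G β) := fun k => (q k).G_closed β k.2
  have hγc : γ.ord < sSup (unionG q β) :=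
    lt_sSup_iUnion_of_sSup_notMem (directed_G hq β) hcl (bddAbove_unionG β) hne hξU
  have hcι : (sSup (unionG q β)).cof ≤ #{k // β ∈ (q k).B} :=
    Ordinal.cof_sSup_iUnion_le hcl (bddAbove_unionG β) hne hξU
  rw [hξc, ord_lt_ord] at hγc
  rw [hξc, hc.cof_ord] at hcι
  exact (hcι.trans ((mk_subtype_le _).trans hιγ)).not_gt hγc

theorem card_r_changed_lt (hq : Directed (leGamma γ) q) (hδ : δ.IsRegular) (hιδ : #ι < δ)
    (i : ι) : #{j : Ordinal.{0} | j ∈ (q i).w ∧ ∃ ξ, (q i).bound ≤ ξ ∧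
      ξ < Order.succ (⨆ k, (q k).bound) ∧ gluedR q j ξ ≠ false} < lift.{1} δ := by
  choose m hmi hmk using hq i
  refine (mk_le_mk_of_subset ?_).trans_lt (mk_iUnion_lt_of_isRegular hδ.lift
    (by simpa using hιδ) fun k => (hmi k).le.card_r_changed_lt)
  rintro j ⟨hj, ξ, hiξ, -, hR⟩
  obtain ⟨k, hjk, hξk, hrk⟩ := exists_of_gluedR_ne_false hR
  refine mem_iUnion.2 ⟨k, hj, ξ, hiξ, hξk.trans_le (hmk k).le.bound_le, ?_⟩
  rw [← (hmk k).le.r_eq j hjk ξ hξk]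
  exact ne_false_of_eq_true hrk

theorem card_G_changed_lt (hq : Directed (leGamma γ) q) (hδ : δ.IsRegular) (hιδ : #ι < δ)
    (i : ι) : #{β : Ordinal.{0} | β ∈ (q i).B ∧ (q i).G β ≠ withSup (unionG q β)} <
      lift.{1} δ := by
  choose m hmi hmk using hq i
  refine (mk_le_mk_of_subset ?_).trans_lt (mk_iUnion_lt_of_isRegular hδ.lift
    (by simpa using hιδ) fun k => (hmi k).le.card_G_changed_lt)
  rintro β ⟨hβ, hne⟩
  obtain ⟨a, haU, hai⟩ :=
    exists_mem_iUnion_notMem (A := fun k : {k // β ∈ (q k).B} => (q k).G β)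
      (k := ⟨i, hβ⟩) ((q i).G_closed β hβ) hne
  obtain ⟨⟨k, hk⟩, hak⟩ := mem_iUnion.1 haU
  exact mem_iUnion.2 ⟨k, hβ, fun h => hai (h ▸ ((hmk k).le.isEndExtension hk).1 hak)⟩

noncomputable def glue (hq : Directed (leGamma γ) q) (hδ : δ.IsRegular) (hγδ : γ < δ)
    (hιγ : #ι ≤ γ) [Nonempty ι] : P1Cond δ lam S x where
  w := ⋃ k, (q k).w
  bound := Order.succ (⨆ k, (q k).bound)
  r := gluedR q
  B := ⋃ k, (q k).B
  Z := gluedZ q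
  G β := withSup (unionG q β)
  w_sub := iUnion_subset fun k => (q k).w_sub
  w_card := mk_iUnion_eq_of_forall_mk_eq (aleph0_le_lift.2 hδ.aleph0_le)
    (by simpa using hιγ.trans hγδ.le) fun k => (q k).w_card
  bound_lt := (isSuccLimit_ord hδ.aleph0_le).succ_lt (iSup_bound_lt hδ (hιγ.trans_lt hγδ))
  B_sub := iUnion_subset fun k => (q k).B_sub
  Z_cond β hβ := by
    obtain ⟨k, hk⟩ := mem_iUnion.1 hβ
    obtain ⟨y, hy, hyδ, hbdd⟩ := (q k).Z_cond β hk
    exact ⟨y, fun a ha => ⟨(hy ha).1, mem_iUnion.2 ⟨k, (hy ha).2⟩⟩, hyδ, hbdd⟩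
  G_bdd β _ := (withSup_subset_Iic (unionG_subset_Iic β)).trans
    fun _ ha => mem_Iio.2 (Order.lt_succ_of_le ha)
  G_closed β _ := sSupClosed_withSup_iUnion ((directed_G hq β).mono fun _ _ h => h.1)
    (fun k => (q k).G_closed β k.2) (bddAbove_unionG β)
  G_cond β _ ξ hξ hinacc b hb hot := by
    obtain ⟨c, hξc, hc⟩ := hinacc
    obtain ⟨⟨k, hk⟩, hξk⟩ := mem_iUnion.1 (mem_unionG_of_eq_ord hq hιγ hc.isRegular hξc hξ)
    have hle : Directed P1Cond.le q := hq.mono fun _ _ => leGamma.le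
    obtain ⟨hbw, b', hb'b, hb'w, hb'x, hr⟩ := (q k).G_cond β hk ξ hξk ⟨c, hξc, hc⟩ b hb hot
    refine ⟨mem_iUnion.2 ⟨k, hbw⟩, b', hb'b, mem_iUnion.2 ⟨k, hb'w⟩, hb'x, ?_⟩
    rw [gluedR_eq hle hb'w ((q k).G_bdd β hk hξk), gluedZ_eq hle hk, hr]

variable (hq : Directed (leGamma γ) q) (hδ : δ.IsRegular) (hγδ : γ < δ) (hιγ : #ι ≤ γ)
  [Nonempty ι]

theorem le_glue (i : ι) : (q i).le (glue hq hδ hγδ hιγ) := by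
  have hle : Directed P1Cond.le q := hq.mono fun _ _ => leGamma.le
  exact ⟨subset_iUnion (fun k => (q k).w) i,
    (le_ciSup Ordinal.bddAbove_of_small i).trans (Order.le_succ _),
    fun j hj ξ hξ => (gluedR_eq hle hj hξ).symm,
    card_r_changed_lt hq hδ (hιγ.trans_lt hγδ) i,
    subset_iUnion (fun k => (q k).B) i,
    fun β hβ => (gluedZ_eq hle hβ).symm,
    fun β hβ => (isEndExtensionAbove_withSup_unionG hq hβ).1,
    card_G_changed_lt hq hδ (hιγ.trans_lt hγδ) i⟩

theorem leGamma_glue (i : ι) : leGamma γ (q i) (glue hq hδ hγδ hιγ) :=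
  leGamma_of_le (le_glue hq hδ hγδ hιγ i) fun _ hβ =>
    (isEndExtensionAbove_withSup_unionG hq hβ).2

end Glue

end P1Cond

theorem P1_leGamma_directed_closed_general (δ lam : Cardinal.{0})
    (hδreg : δ.IsRegular)
    (hlt : δ < lam)
    (S : Set Ordinal.{0})
    (x : Ordinal.{0} → Set Ordinal.{0})
    (γ : Cardinal.{0}) (hγlt : γ < δ) :
    ∀ D : Set (P1Cond δ lam S x), #D ≤ Cardinal.lift.{1} γ →
      (∀ p ∈ D, ∀ q ∈ D, ∃ s ∈ D, P1Cond.leGamma γ p s ∧ P1Cond.leGamma γ q s) →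
      ∃ s : P1Cond δ lam S x, ∀ p ∈ D, P1Cond.leGamma γ p s := by
  intro D hD hdir
  rcases D.eq_empty_or_nonempty with rfl | hne
  · obtain ⟨s⟩ := P1Cond.nonempty (S := S) (x := x) hδreg.pos.ne' hlt.le
    exact ⟨s, fun _ hp => hp.elim⟩
  obtain ⟨q, rfl⟩ := exists_range_eq_of_mk_le hne (by rwa [lift_uzero])
  have : Nonempty γ.out := range_nonempty_iff_nonempty.1 hne
  have hq : Directed (P1Cond.leGamma γ) q := by
    intro k l
    obtain ⟨_, ⟨m, rfl⟩, hkm, hlm⟩ := hdir _ ⟨k, rfl⟩ _ ⟨l, rfl⟩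
    exact ⟨m, hkm, hlm⟩
  refine ⟨P1Cond.glue hq hδreg hγlt (mk_out γ).le, ?_⟩
  rintro _ ⟨i, rfl⟩
  exact P1Cond.leGamma_glue hq hδreg hγlt (mk_out γ).le i

/-- For every infinite cardinal `γ < δ`, the ordering
`⟨P¹_{δ,λ}[S], ≤^γ⟩` is `γ⁺`-directed closed: every subset of cardinality at most `γ`
which is directed with respect to `≤^γ` has an upper bound with respect to `≤^γ`. -/
theorem P1_leGamma_directed_closed (δ lam : Cardinal.{0})
    (hδreg : δ.IsRegular) (hlamreg : lam.IsRegular)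
    (hδinacc : δ.IsInaccessible) (hlt : δ < lam) (hlam_gt : Order.succ δ < lam)
    (S : Set Ordinal.{0}) (hS_sub : S ⊆ Set.Iio lam.ord)
    (hS_cof : ∀ β ∈ S, Ordinal.cof β = δ) (hS_gt : ∀ β ∈ S, δ.ord < β)
    (x : Ordinal.{0} → Set Ordinal.{0})
    (hx_sub : ∀ β ∈ S, x β ⊆ Set.Iio β)
    (hx_cofinal : ∀ β ∈ S, ∀ c < β, ∃ d ∈ x β, c ≤ d)
    (hx_ot : ∀ β ∈ S, otype (x β) = Ordinal.lift.{1} δ.ord)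
    (γ : Cardinal.{0}) (hγinf : ℵ₀ ≤ γ) (hγlt : γ < δ) :
    ∀ D : Set (P1Cond δ lam S x), #D ≤ Cardinal.lift.{1} γ →
      (∀ p ∈ D, ∀ q ∈ D, ∃ s ∈ D, P1Cond.leGamma γ p s ∧ P1Cond.leGamma γ q s) →
      ∃ s : P1Cond δ lam S x, ∀ p ∈ D, P1Cond.leGamma γ p s :=
  P1_leGamma_directed_closed_general δ lam hδreg hlt S x γ hγlt
end

section
/- For regular cardinals κ₀ ≤ κ₁ with κ₀ uncountable, the partial ordering K(κ₀,κ₁) is κ₀-directed closed: for every cardinal γ < κ₀, every directed subset of K(κ₀,κ₁) of cardinality γ has an upper bound in K(κ₀,κ₁). -/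
open Cardinal

/-- A condition in `K(κ₀,κ₁)`: a triple `⟨w, α, r̄⟩` where `w ⊆ κ₁` has cardinality `κ₀`,
`α < κ₀`, and `r̄ = ⟨r_i : i ∈ w⟩` is a sequence of functions from `α` to `{0,1}`
(represented as a total function `r`, whose values are only relevant for `i ∈ w` and
arguments `< α`). -/
structure KCond (κ₀ κ₁ : Cardinal.{0}) where
  /-- the support `w` -/
  w : Set Ordinal.{0}
  /-- the common domain `α` of the functions `r_i` -/
  bound : Ordinal.{0}
  /-- `r i ξ` is the value `r_i(ξ)` for `i ∈ w` and `ξ < bound` -/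
  r : Ordinal.{0} → Ordinal.{0} → Bool
  w_sub : w ⊆ Set.Iio κ₁.ord
  w_card : #w = Cardinal.lift.{1} κ₀
  bound_lt : bound < κ₀.ord

/-- The ordering on `K(κ₀,κ₁)`. -/
def KCond.le {κ₀ κ₁ : Cardinal.{0}} (p q : KCond κ₀ κ₁) : Prop :=
  p.w ⊆ q.w ∧ p.bound ≤ q.bound ∧
    (∀ i ∈ p.w, ∀ ξ < p.bound, p.r i ξ = q.r i ξ) ∧
    #{i : Ordinal.{0} | i ∈ p.w ∧ ∃ ξ, p.bound ≤ ξ ∧ ξ < q.bound ∧ q.r i ξ ≠ false} <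
      Cardinal.lift.{1} κ₀

/-- Two conditions are compatible if some condition extends both. -/
def KCond.Compatible {κ₀ κ₁ : Cardinal.{0}} (p q : KCond κ₀ κ₁) : Prop :=
  ∃ s : KCond κ₀ κ₁, p.le s ∧ q.le s

/-!
Glue the members of `D`: take the union of their supports, the supremum of their bounds (still
below `κ₀` by regularity, as `|D| < κ₀`), and the union of their functions, which agree on common
domains because any two members of `D` have a common extension. A coordinate `i ∈ p.w` on which
the glued condition is nonzero above `p.bound` is nonzero there already in some `q ∈ D`, so it is
counted by the last clause of `p ≤ u_q` for a common extension `u_q` of `p` and `q`. Hence these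
coordinates form a union of fewer than `κ₀` sets of size `< κ₀`, of size `< κ₀` by regularity.
-/

namespace KCond

variable {κ₀ κ₁ : Cardinal.{0}}

/-- The set whose cardinality the last clause of `p.le q` bounds by `κ₀`. -/
def changed (p q : KCond κ₀ κ₁) : Set Ordinal.{0} :=
  {i | i ∈ p.w ∧ ∃ ξ, p.bound ≤ ξ ∧ ξ < q.bound ∧ q.r i ξ ≠ false}

theorem r_eq_of_le_of_le {p q s : KCond κ₀ κ₁} (hps : p.le s) (hqs : q.le s) {i ξ : Ordinal}
    (hip : i ∈ p.w) (hiq : i ∈ q.w) (hξp : ξ < p.bound) (hξq : ξ < q.bound) :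
    p.r i ξ = q.r i ξ :=
  (hps.2.2.1 i hip ξ hξp).trans (hqs.2.2.1 i hiq ξ hξq).symm

theorem mem_changed_of_le {p q u : KCond κ₀ κ₁} (hqu : q.le u) {i ξ : Ordinal}
    (hip : i ∈ p.w) (hiq : i ∈ q.w) (hpξ : p.bound ≤ ξ) (hξq : ξ < q.bound)
    (hr : q.r i ξ ≠ false) : i ∈ p.changed u :=
  ⟨hip, ξ, hpξ, hξq.trans_le hqu.2.1, by rwa [← hqu.2.2.1 i hiq ξ hξq]⟩

theorem nonempty (hκ₀ : κ₀ ≠ 0) (hle : κ₀ ≤ κ₁) : Nonempty (KCond κ₀ κ₁) :=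
  ⟨{ w := Set.Iio κ₀.ord
     bound := 0
     r := fun _ _ => false
     w_sub := Set.Iio_subset_Iio (Cardinal.ord_le_ord.2 hle)
     w_card := by rw [Cardinal.mk_Iio_ordinal, Cardinal.card_ord]
     bound_lt := Cardinal.ord_pos.2 (pos_iff_ne_zero.2 hκ₀) }⟩

section Glue

variable (D : Set (KCond κ₀ κ₁))

/-- Reads `r i ξ` off some member of `D` whose domain contains `(i, ξ)`; when `D` is pairwise
compatible the choice does not matter (`glueFun_eq`). -/
noncomputable def glueFun (i ξ : Ordinal.{0}) : Bool :=
  open Classical in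
  if h : ∃ p ∈ D, i ∈ p.w ∧ ξ < p.bound then h.choose.r i ξ else false

variable {D}

theorem glueFun_eq (hD : ∀ p ∈ D, ∀ q ∈ D, p.Compatible q) {p : KCond κ₀ κ₁} (hp : p ∈ D)
    {i ξ : Ordinal} (hi : i ∈ p.w) (hξ : ξ < p.bound) : glueFun D i ξ = p.r i ξ := by
  have h : ∃ q ∈ D, i ∈ q.w ∧ ξ < q.bound := ⟨p, hp, hi, hξ⟩
  obtain ⟨hqD, hiq, hξq⟩ := h.choose_spec
  obtain ⟨s, hqs, hps⟩ := hD _ hqD p hp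
  rw [glueFun, dif_pos h]
  exact r_eq_of_le_of_le hqs hps hiq hi hξq hξ

theorem exists_of_glueFun_ne_false {i ξ : Ordinal} (h : glueFun D i ξ ≠ false) :
    ∃ q ∈ D, i ∈ q.w ∧ ξ < q.bound ∧ q.r i ξ ≠ false := by
  classical
  by_cases hex : ∃ q ∈ D, i ∈ q.w ∧ ξ < q.bound
  · obtain ⟨hqD, hiq, hξq⟩ := hex.choose_spec
    refine ⟨_, hqD, hiq, hξq, ?_⟩
    rwa [glueFun, dif_pos hex] at h
  · simp [glueFun, hex] at h

theorem sSup_bound_lt (h₀ : κ₀.IsRegular) (hD : #D < Cardinal.lift.{1} κ₀) :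
    sSup (bound '' D) < κ₀.ord := by
  refine Ordinal.sSup_lt_of_lt_cof ?_ (by rintro _ ⟨p, -, rfl⟩; exact p.bound_lt)
  rw [Cardinal.lift_ord, h₀.lift.cof_ord]
  exact Cardinal.mk_image_le.trans_lt hD

theorem bound_le_sSup_bound {p : KCond κ₀ κ₁} (hp : p ∈ D) : p.bound ≤ sSup (bound '' D) :=
  le_csSup ⟨κ₀.ord, by rintro _ ⟨q, -, rfl⟩; exact q.bound_lt.le⟩ ⟨p, hp, rfl⟩

theorem mk_biUnion_w (hκ₀ : ℵ₀ ≤ κ₀) (hD : #D ≤ Cardinal.lift.{1} κ₀) (hne : D.Nonempty) :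
    #(⋃ p ∈ D, p.w) = Cardinal.lift.{1} κ₀ := by
  obtain ⟨p₀, hp₀⟩ := hne
  have : Nonempty D := ⟨⟨p₀, hp₀⟩⟩
  refine le_antisymm ?_ ?_
  · calc #(⋃ p ∈ D, p.w)
        ≤ #D * ⨆ p : D, #(p.1.w) := Cardinal.mk_biUnion_le _ _
      _ ≤ Cardinal.lift.{1} κ₀ * Cardinal.lift.{1} κ₀ := by
          simp only [w_card, ciSup_const]
          gcongr
      _ = Cardinal.lift.{1} κ₀ := Cardinal.mul_eq_self (Cardinal.aleph0_le_lift.2 hκ₀)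
  · rw [← p₀.w_card]
    exact Cardinal.mk_le_mk_of_subset (Set.subset_biUnion_of_mem hp₀)

noncomputable def glue (h₀ : κ₀.IsRegular) (hD : #D < Cardinal.lift.{1} κ₀) (hne : D.Nonempty) :
    KCond κ₀ κ₁ where
  w := ⋃ p ∈ D, p.w
  bound := sSup (bound '' D)
  r := glueFun D
  w_sub := Set.iUnion₂_subset fun p _ => p.w_sub
  w_card := mk_biUnion_w h₀.aleph0_le hD.le hne
  bound_lt := sSup_bound_lt h₀ hD

theorem le_glue (h₀ : κ₀.IsRegular) (hD : #D < Cardinal.lift.{1} κ₀) (hne : D.Nonempty)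
    (hcomp : ∀ p ∈ D, ∀ q ∈ D, p.Compatible q) {p : KCond κ₀ κ₁} (hp : p ∈ D) :
    p.le (glue h₀ hD hne) := by
  refine ⟨Set.subset_biUnion_of_mem hp, bound_le_sSup_bound hp,
    fun i hi ξ hξ => (glueFun_eq hcomp hp hi hξ).symm, ?_⟩
  choose u hpu hqu using hcomp p hp
  suffices p.changed (glue h₀ hD hne) ⊆ ⋃ q ∈ D, p.changed (u q ‹_›) from
    (Cardinal.mk_le_mk_of_subset this).trans_lt <|
      (Cardinal.card_biUnion_lt_iff_forall_of_isRegular h₀.lift hD).2 fun q hq => (hpu q hq).2.2.2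
  rintro i ⟨hi, ξ, hpξ, -, hr⟩
  obtain ⟨q, hq, hiq, hξq, hrq⟩ := exists_of_glueFun_ne_false hr
  exact Set.mem_iUnion₂.2 ⟨q, hq, mem_changed_of_le (hqu q hq) hi hiq hpξ hξq hrq⟩

end Glue

theorem exists_le_of_compatible (h₀ : κ₀.IsRegular) (hle : κ₀ ≤ κ₁) {D : Set (KCond κ₀ κ₁)}
    (hD : #D < Cardinal.lift.{1} κ₀) (hcomp : ∀ p ∈ D, ∀ q ∈ D, p.Compatible q) :
    ∃ s : KCond κ₀ κ₁, ∀ p ∈ D, p.le s := by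
  rcases D.eq_empty_or_nonempty with rfl | hne
  · obtain ⟨s⟩ := nonempty h₀.ne_zero hle
    exact ⟨s, by simp⟩
  · exact ⟨glue h₀ hD hne, fun p hp => le_glue h₀ hD hne hcomp hp⟩

end KCond

theorem K_directed_closed_general (κ₀ κ₁ : Cardinal.{0})
    (h₀ : κ₀.IsRegular) (hle : κ₀ ≤ κ₁) :
    ∀ γ : Cardinal.{0}, γ < κ₀ →
      ∀ D : Set (KCond κ₀ κ₁), #D = Cardinal.lift.{1} γ →
        (∀ p ∈ D, ∀ q ∈ D, ∃ s ∈ D, p.le s ∧ q.le s) →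
        ∃ s : KCond κ₀ κ₁, ∀ p ∈ D, p.le s := by
  intro γ hγ D hD hdir
  refine KCond.exists_le_of_compatible h₀ hle (hD ▸ Cardinal.lift_lt.2 hγ) fun p hp q hq => ?_
  obtain ⟨s, -, hps, hqs⟩ := hdir p hp q hq
  exact ⟨s, hps, hqs⟩

/-- For regular cardinals `κ₀ ≤ κ₁` with `κ₀` uncountable, the partial
ordering `K(κ₀,κ₁)` is `κ₀`-directed closed. -/
theorem K_directed_closed (κ₀ κ₁ : Cardinal.{0})
    (h₀ : κ₀.IsRegular) (h₁ : κ₁.IsRegular) (hle : κ₀ ≤ κ₁) (hunc : ℵ₀ < κ₀) :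
    ∀ γ : Cardinal.{0}, γ < κ₀ →
      ∀ D : Set (KCond κ₀ κ₁), #D = Cardinal.lift.{1} γ →
        (∀ p ∈ D, ∀ q ∈ D, ∃ s ∈ D, p.le s ∧ q.le s) →
        ∃ s : KCond κ₀ κ₁, ∀ p ∈ D, p.le s :=
  K_directed_closed_general κ₀ κ₁ h₀ hle
end
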